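/- arXiv:2003.07206 — 11 statements merged into one kernel-verified Lean document; each statement's English description precedes it below -/
import Mathlib

section
/- Let c, M > 0 and suppose that either (η > 1 and a, b > 0) or (η = 1 and b > a > 0). Then there exists a constant C > 0 such that for all real numbers x, y with 0 ≤ x ≤ M·y < ∞ one has (a(1+x)y² + b(1+x)^η y²)/(1+y²) − 2b(1+x)^η y⁴/(1+y²)² + c(1+x)^η y⁴/((1+y²)²(1 + log(1+y²))) ≤ C. -/
/-!
Write `u = 1 + x`, `t = y² / (1 + y²) ∈ [0, 1)` and `L = 1 + log (1 + y²) ≥ 1`; the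
left-hand side becomes `(a u + b u^η) t - 2 b u^η t² + c u^η t² / L`. Under either hypothesis
there is `a' < b` with `a u ≤ a' u^η` for large `u`, and then the expression is at most
`u^η t ((a' - b) + 2 b (1 - t) + c t / L)`, which is nonpositive once `y` is large, since
`t → 1` and `L → ∞`. In the remaining region either `u` is bounded directly or `y` is, and
then so is `u ≤ 1 + M y`; there every term is bounded.
-/

open Filter Real

/-- The left-hand side of the inequality, with `u = 1 + x`. -/
noncomputable def logExpr (a b c η u y : ℝ) : ℝ :=
  (a * u * y ^ 2 + b * u ^ η * y ^ 2) / (1 + y ^ 2)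
    - 2 * b * u ^ η * y ^ 4 / (1 + y ^ 2) ^ 2
    + c * u ^ η * y ^ 4 / ((1 + y ^ 2) ^ 2 * (1 + log (1 + y ^ 2)))

section logExpr

variable {a b c η u y : ℝ}

lemma logExpr_eq (a b c η u y : ℝ) :
    logExpr a b c η u y = (a * u + b * u ^ η) * (y ^ 2 / (1 + y ^ 2))
      - 2 * b * u ^ η * (y ^ 2 / (1 + y ^ 2)) ^ 2
      + c * u ^ η * ((y ^ 2 / (1 + y ^ 2)) ^ 2 / (1 + log (1 + y ^ 2))) := by
  rw [logExpr, ← div_div, div_pow]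
  ring

lemma sq_div_one_add_sq_le_one (y : ℝ) : y ^ 2 / (1 + y ^ 2) ≤ 1 :=
  div_le_one_of_le₀ (by linarith) (by positivity)

lemma one_le_one_add_log_one_add_sq (y : ℝ) : 1 ≤ 1 + log (1 + y ^ 2) := by
  linarith [log_nonneg (by nlinarith : (1 : ℝ) ≤ 1 + y ^ 2)]

lemma logExpr_le {U : ℝ} (ha : 0 ≤ a) (hb : 0 ≤ b) (hc : 0 ≤ c) (hη : 0 ≤ η)
    (hu : 0 ≤ u) (huU : u ≤ U) : logExpr a b c η u y ≤ a * U + (b + c) * U ^ η := by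
  rw [logExpr_eq]
  set t := y ^ 2 / (1 + y ^ 2)
  set L := 1 + log (1 + y ^ 2)
  have ht₀ : 0 ≤ t := by positivity
  have ht₁ : t ≤ 1 := sq_div_one_add_sq_le_one y
  have hL : 1 ≤ L := one_le_one_add_log_one_add_sq y
  have hpow : u ^ η ≤ U ^ η := rpow_le_rpow hu huU hη
  have hfirst : (a * u + b * u ^ η) * t ≤ a * U + b * U ^ η := by
    calc (a * u + b * u ^ η) * t ≤ a * u + b * u ^ η :=
          mul_le_of_le_one_right (by positivity) ht₁
      _ ≤ a * U + b * U ^ η := by gcongr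
  have hlast : c * u ^ η * (t ^ 2 / L) ≤ c * U ^ η := by
    calc c * u ^ η * (t ^ 2 / L) ≤ c * u ^ η :=
          mul_le_of_le_one_right (by positivity)
            (div_le_one_of_le₀ ((pow_le_one₀ ht₀ ht₁).trans hL) (by linarith))
      _ ≤ c * U ^ η := by gcongr
  have hmiddle : 0 ≤ 2 * b * u ^ η * t ^ 2 := by positivity
  linarith

lemma logExpr_nonpos {a' : ℝ} (hc : 0 ≤ c) (hu : 0 ≤ u) (ha : a * u ≤ a' * u ^ η)
    (hby : 4 * b ≤ (b - a') * (1 + y ^ 2))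
    (hcy : 2 * c ≤ (b - a') * (1 + log (1 + y ^ 2))) : logExpr a b c η u y ≤ 0 := by
  rw [logExpr_eq]
  set t := y ^ 2 / (1 + y ^ 2)
  set L := 1 + log (1 + y ^ 2)
  have hy : 0 < 1 + y ^ 2 := by positivity
  have ht₀ : 0 ≤ t := by positivity
  have ht₁ : t ≤ 1 := sq_div_one_add_sq_le_one y
  have hL : 0 < L := by linarith [one_le_one_add_log_one_add_sq y]
  have hb : 2 * b * (1 - t) ≤ (b - a') / 2 := by
    have ht : 1 - t = 1 / (1 + y ^ 2) := by simp only [t]; field_simp; ring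
    rw [ht, mul_one_div, div_le_iff₀ hy]
    linarith
  have hcL : c * (t / L) ≤ (b - a') / 2 := by
    calc c * (t / L) ≤ c * (1 / L) := by gcongr
      _ ≤ (b - a') / 2 := by rw [mul_one_div, div_le_iff₀ hL]; linarith
  calc (a * u + b * u ^ η) * t - 2 * b * u ^ η * t ^ 2 + c * u ^ η * (t ^ 2 / L)
      ≤ (a' * u ^ η + b * u ^ η) * t - 2 * b * u ^ η * t ^ 2 + c * u ^ η * (t ^ 2 / L) := by
        gcongr
    _ = u ^ η * t * ((a' - b) + 2 * b * (1 - t) + c * (t / L)) := by ring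
    _ ≤ 0 := mul_nonpos_of_nonneg_of_nonpos (by positivity) (by linarith)

end logExpr

lemma eventually_mul_le_mul_rpow {η a' : ℝ} (hη : 1 < η) (ha' : 0 < a') (a : ℝ) :
    ∀ᶠ u in atTop, a * u ≤ a' * u ^ η := by
  filter_upwards [(tendsto_rpow_atTop (sub_pos.2 hη)).eventually_ge_atTop (a / a'),
    eventually_ge_atTop 0] with u hu hu₀
  calc a * u = a / a' * u * a' := by field_simp
    _ ≤ u ^ (η - 1) * u * a' := by gcongr
    _ = a' * u ^ η := by
        rw [mul_comm _ u, ← rpow_one_add' hu₀ (by linarith)]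
        ring_nf

lemma exists_lt_eventually_mul_le_rpow {a b η : ℝ}
    (h : (1 < η ∧ 0 < a ∧ 0 < b) ∨ (η = 1 ∧ 0 < a ∧ a < b)) :
    ∃ a' < b, ∀ᶠ u in atTop, a * u ≤ a' * u ^ η := by
  rcases h with ⟨hη, -, hb⟩ | ⟨rfl, -, hab⟩
  · exact ⟨b / 2, by linarith, eventually_mul_le_mul_rpow hη (by positivity) a⟩
  · exact ⟨a, hab, Eventually.of_forall fun u => by rw [rpow_one]⟩

lemma eventually_le_mul_one_add_and_le_mul_one_add_log {δ : ℝ} (hδ : 0 < δ) (p q : ℝ) :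
    ∀ᶠ s in atTop, p ≤ δ * (1 + s) ∧ q ≤ δ * (1 + log (1 + s)) := by
  have hs : Tendsto (fun s : ℝ => 1 + s) atTop atTop :=
    tendsto_atTop_add_const_left _ _ tendsto_id
  have hlog : Tendsto (fun s : ℝ => 1 + log (1 + s)) atTop atTop :=
    tendsto_atTop_add_const_left _ _ (tendsto_log_atTop.comp hs)
  filter_upwards [hs.eventually_ge_atTop (p / δ), hlog.eventually_ge_atTop (q / δ)]
    with s h₁ h₂
  exact ⟨(div_le_iff₀' hδ).1 h₁, (div_le_iff₀' hδ).1 h₂⟩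

/-- Lemma 5.1 (the "log lemma"): an algebraic inequality. -/
theorem log_lemma (a b c M η : ℝ) (hc : 0 < c) (hM : 0 < M)
    (h : (1 < η ∧ 0 < a ∧ 0 < b) ∨ (η = 1 ∧ 0 < a ∧ a < b)) :
    ∃ C : ℝ, 0 < C ∧ ∀ x y : ℝ, 0 ≤ x → x ≤ M * y →
      (a * (1 + x) * y ^ 2 + b * (1 + x) ^ η * y ^ 2) / (1 + y ^ 2)
        - 2 * b * (1 + x) ^ η * y ^ 4 / (1 + y ^ 2) ^ 2
        + c * (1 + x) ^ η * y ^ 4 / ((1 + y ^ 2) ^ 2 * (1 + Real.log (1 + y ^ 2))) ≤ C := by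
  have ha : 0 < a := by obtain ⟨-, ha, -⟩ | ⟨-, ha, -⟩ := h <;> exact ha
  have hb : 0 < b := by obtain ⟨-, -, hb⟩ | ⟨-, -, hab⟩ := h <;> linarith
  have hη : 0 ≤ η := by obtain ⟨hη, -⟩ | ⟨rfl, -⟩ := h <;> linarith
  obtain ⟨a', hab', hu⟩ := exists_lt_eventually_mul_le_rpow h
  obtain ⟨u₀, hu₀⟩ := eventually_atTop.1 hu
  obtain ⟨s₀, hs₀⟩ := eventually_atTop.1
    (eventually_le_mul_one_add_and_le_mul_one_add_log (sub_pos.2 hab') (4 * b) (2 * c))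
  set U := max u₀ (1 + M * √s₀)
  have hC : 0 < a * U + (b + c) * U ^ η + 1 := by positivity
  refine ⟨_, hC, fun x y hx hxy => ?_⟩
  change logExpr a b c η (1 + x) y ≤ _
  by_cases hlarge : u₀ ≤ 1 + x ∧ s₀ ≤ y ^ 2
  · obtain ⟨hby, hcy⟩ := hs₀ _ hlarge.2
    linarith [logExpr_nonpos hc.le (by linarith) (hu₀ _ hlarge.1) hby hcy]
  · have hU : 1 + x ≤ U := by
      by_cases hx₀ : u₀ ≤ 1 + x
      · have hy : y ≤ √s₀ :=
          (le_abs_self y).trans (abs_le_sqrt (by linarith [not_and.1 hlarge hx₀]))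
        have : x ≤ M * √s₀ := hxy.trans (by gcongr)
        exact le_max_of_le_right (by linarith)
      · exact le_max_of_le_left (by linarith)
    linarith [logExpr_le ha.le hb.le hc.le hη (by linarith) hU (y := y)]
end

section
/- Let c, M > 0 and suppose that either (η > 1 and a, b > 0) or (η = 1 and b > a > 0). Then the function φ(x) = a(1+x) + b(1+x)^η − 2b(1+x)^η·(x/M)⁴/(1 + (x/M)²)² + c(1+x)^η/(1 + log(1 + (x/M)²)) tends to −∞ as x → ∞. -/
/-!
Write `t = x / M`. Then `φ(x) = (1 + x) ^ η * g(x)` with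
`g(x) = a (1 + x) ^ (1 - η) + b (1 - 2 t⁴ / (1 + t²)²) + c / (1 + log (1 + t²))`.
As `x → ∞` the quartic ratio tends to `1` and the logarithmic term to `0`, while
`a (1 + x) ^ (1 - η)` tends to `0` if `η > 1` and equals `a` if `η = 1`. In both cases `g` has a
negative limit (`-b`, resp. `a - b`), and `(1 + x) ^ η → ∞` forces `φ → -∞`.
-/

open Filter Real Topology

lemma tendsto_pow_four_div_one_add_sq_sq_atTop :
    Tendsto (fun t : ℝ => t ^ 4 / (1 + t ^ 2) ^ 2) atTop (𝓝 1) := by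
  have hinv : Tendsto (fun t : ℝ => (1 + t ^ 2)⁻¹) atTop (𝓝 0) :=
    (tendsto_atTop_add_const_left _ _ (tendsto_pow_atTop two_ne_zero)).inv_tendsto_atTop
  have hsq := ((tendsto_const_nhds (x := (1 : ℝ))).sub hinv).pow 2
  rw [sub_zero, one_pow] at hsq
  refine hsq.congr fun t => ?_
  have : 1 + t ^ 2 ≠ 0 := by positivity
  field_simp
  ring

lemma tendsto_const_div_one_add_log_atTop (c : ℝ) :
    Tendsto (fun s : ℝ => c / (1 + log s)) atTop (𝓝 0) :=
  tendsto_const_nhds.div_atTop (tendsto_atTop_add_const_left _ _ tendsto_log_atTop)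

lemma tendsto_const_mul_one_add_rpow_one_sub_atTop (a : ℝ) {η : ℝ} (hη : 1 < η) :
    Tendsto (fun x : ℝ => a * (1 + x) ^ (1 - η)) atTop (𝓝 0) := by
  have hpow : Tendsto (fun x : ℝ => (1 + x) ^ (-(η - 1))) atTop (𝓝 0) :=
    (tendsto_rpow_neg_atTop (by linarith)).comp (tendsto_atTop_add_const_left _ _ tendsto_id)
  simpa [neg_sub] using hpow.const_mul a

lemma mul_one_add_eq_one_add_rpow_mul (a η : ℝ) {x : ℝ} (hx : 0 < 1 + x) :
    a * (1 + x) = (1 + x) ^ η * (a * (1 + x) ^ (1 - η)) := by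
  rw [mul_left_comm, ← rpow_add hx, add_sub_cancel, rpow_one]

theorem log_lemma_limit_general (a b c M η : ℝ) (hM : 0 < M)
    (h : (1 < η ∧ 0 < a ∧ 0 < b) ∨ (η = 1 ∧ 0 < a ∧ a < b)) :
    Filter.Tendsto (fun x : ℝ =>
        a * (1 + x) + b * (1 + x) ^ η
          - 2 * b * (1 + x) ^ η * (x / M) ^ 4 / (1 + (x / M) ^ 2) ^ 2
          + c * (1 + x) ^ η / (1 + Real.log (1 + (x / M) ^ 2)))
      Filter.atTop Filter.atBot := by
  obtain ⟨A, hA, hAb⟩ :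
      ∃ A, Tendsto (fun x : ℝ => a * (1 + x) ^ (1 - η)) atTop (𝓝 A) ∧ A < b := by
    rcases h with ⟨hη, -, hb⟩ | ⟨rfl, -, hab⟩
    · exact ⟨0, tendsto_const_mul_one_add_rpow_one_sub_atTop a hη, hb⟩
    · exact ⟨a, by simp, hab⟩
  have hη : 0 < η := by rcases h with ⟨hη, -⟩ | ⟨hη, -⟩ <;> linarith
  have ht : Tendsto (fun x : ℝ => x / M) atTop atTop := tendsto_id.atTop_div_const hM
  have hquartic := tendsto_pow_four_div_one_add_sq_sq_atTop.comp ht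
  have hlog := (tendsto_const_div_one_add_log_atTop c).comp
    (tendsto_atTop_add_const_left _ 1 ((tendsto_pow_atTop two_ne_zero).comp ht))
  have hg : Tendsto (fun x : ℝ => a * (1 + x) ^ (1 - η)
      + b * (1 - 2 * ((x / M) ^ 4 / (1 + (x / M) ^ 2) ^ 2))
      + c / (1 + log (1 + (x / M) ^ 2))) atTop (𝓝 (A - b)) := by
    convert (hA.add ((hquartic.const_mul 2).const_sub 1 |>.const_mul b)).add hlog using 2
    · rfl
    · ring
  have hpow : Tendsto (fun x : ℝ => (1 + x) ^ η) atTop atTop :=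
    (tendsto_rpow_atTop hη).comp (tendsto_atTop_add_const_left _ _ tendsto_id)
  refine (hpow.atTop_mul_neg (by linarith) hg).congr' ?_
  filter_upwards [eventually_gt_atTop (-1)] with x hx
  rw [mul_one_add_eq_one_add_rpow_mul a η (by linarith : 0 < 1 + x)]
  ring

/-- Key limit computation in the proof of the "log lemma" (Lemma 5.1):
the function φ tends to −∞ as x → ∞. -/
theorem log_lemma_limit (a b c M η : ℝ) (hc : 0 < c) (hM : 0 < M)
    (h : (1 < η ∧ 0 < a ∧ 0 < b) ∨ (η = 1 ∧ 0 < a ∧ a < b)) :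
    Filter.Tendsto (fun x : ℝ =>
        a * (1 + x) + b * (1 + x) ^ η
          - 2 * b * (1 + x) ^ η * (x / M) ^ 4 / (1 + (x / M) ^ 2) ^ 2
          + c * (1 + x) ^ η / (1 + Real.log (1 + (x / M) ^ 2)))
      Filter.atTop Filter.atBot :=
  log_lemma_limit_general a b c M η hM h
end

section
/- Let v : ℝ → ℝ be 2π-periodic and continuously differentiable. Then for every x ∈ ℝ, (1/(2 sinh π)) ∫₀^{2π} cosh((x−y) − 2π⌊(x−y)/(2π)⌋ − π) · (v(y)² + v'(y)²/2) dy ≥ v(x)²/2. -/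
open Real MeasureTheory intervalIntegral

/-!
Shifting the window of integration to `[x - 2π, x]`, the kernel becomes `cosh (y - c)` with
`c = x - π`. Pointwise, `cosh (y - c) (v² + v'²/2)` dominates the derivative
`cosh (y - c) v²/2 + sinh (y - c) v v'` of `sinh (y - c) v²/2`: the difference is
`(eᵗ (v - v')² + e⁻ᵗ (v + v')²) / 4` with `t = y - c`. Integrating, the two boundary terms
are each `sinh π · v(x)² / 2`, because `v (x - 2π) = v x`.
-/

theorem Function.Periodic.deriv {𝕜 F : Type*} [NontriviallyNormedField 𝕜] [NormedAddCommGroup F]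
    [NormedSpace 𝕜 F] {f : 𝕜 → F} {c : 𝕜} (hf : Function.Periodic f c) :
    Function.Periodic (deriv f) c := fun x => by
  rw [← deriv_comp_add_const, show (fun y => f (y + c)) = f from funext hf]

theorem cosh_mul_sq_half_add_sinh_mul_le (t a b : ℝ) :
    cosh t * a ^ 2 / 2 + sinh t * (a * b) ≤ cosh t * (a ^ 2 + b ^ 2 / 2) := by
  rw [cosh_eq, sinh_eq]
  nlinarith [mul_nonneg (exp_pos t).le (sq_nonneg (a - b)),
    mul_nonneg (exp_pos (-t)).le (sq_nonneg (a + b))]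

theorem sinh_mul_sq_sub_le_integral_cosh_mul {v : ℝ → ℝ} (hv : ContDiff ℝ 1 v) (c : ℝ)
    {a b : ℝ} (hab : a ≤ b) :
    sinh (b - c) * v b ^ 2 / 2 - sinh (a - c) * v a ^ 2 / 2 ≤
      ∫ y in a..b, cosh (y - c) * (v y ^ 2 + deriv v y ^ 2 / 2) := by
  have hv₀ : Continuous v := hv.continuous
  have hv₁ : Continuous (deriv v) := hv.continuous_deriv le_rfl
  have hderiv : ∀ y, HasDerivAt (fun y => sinh (y - c) * v y ^ 2 / 2)
      (cosh (y - c) * v y ^ 2 / 2 + sinh (y - c) * (v y * deriv v y)) y := by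
    intro y
    have hvy := ((hv.differentiable one_ne_zero) y).hasDerivAt
    have hsinh : HasDerivAt (fun y => sinh (y - c)) (cosh (y - c)) y := by
      simpa using ((hasDerivAt_id y).sub_const c).sinh
    have hsq : HasDerivAt (fun y => v y ^ 2) (2 * v y * deriv v y) y := by
      simpa using hvy.fun_pow 2
    exact ((hsinh.mul hsq).div_const 2).congr_deriv (by ring)
  rw [← integral_eq_sub_of_hasDerivAt (fun y _ => hderiv y)
    (Continuous.intervalIntegrable (by fun_prop) _ _)]
  exact integral_mono_on hab (Continuous.intervalIntegrable (by fun_prop) _ _)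
    (Continuous.intervalIntegrable (by fun_prop) _ _)
    fun y _ => cosh_mul_sq_half_add_sinh_mul_le _ _ _

theorem periodic_cosh_sub_floor :
    Function.Periodic (fun z : ℝ => cosh (z - 2 * π * (⌊z / (2 * π)⌋ : ℤ) - π)) (2 * π) := by
  intro z
  have h : (z + 2 * π) / (2 * π) = z / (2 * π) + 1 := by
    rw [add_div, div_self (by positivity)]
  simp only [h, Int.floor_add_one]
  push_cast
  ring_nf

theorem cosh_sub_floor_eq_of_nonneg_of_lt {z : ℝ} (h0 : 0 ≤ z) (h2 : z < 2 * π) :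
    cosh (z - 2 * π * (⌊z / (2 * π)⌋ : ℤ) - π) = cosh (z - π) := by
  rw [Int.floor_eq_zero_iff.2 ⟨by positivity, (div_lt_one (by positivity)).2 h2⟩]
  simp

/-- The convolution inequality G*(v² + v_x²/2) ≥ v²/2 (equation (6.12)), where
G(x) = cosh(x − 2π⌊x/(2π)⌋ − π)/(2 sinh π) is the Green's function of 1 − ∂²ₓₓ
on the torus 𝕋 = ℝ/2πℤ, for a C¹ 2π-periodic function v. -/
theorem green_convolution_lower_bound (v : ℝ → ℝ) (hv : ContDiff ℝ 1 v)
    (hper : ∀ x, v (x + 2 * π) = v x) :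
    ∀ x : ℝ, (1 / (2 * Real.sinh π)) *
      (∫ y in (0 : ℝ)..(2 * π),
        Real.cosh ((x - y) - 2 * π * (⌊(x - y) / (2 * π)⌋ : ℤ) - π) *
          ((v y) ^ 2 + (deriv v y) ^ 2 / 2)) ≥ (v x) ^ 2 / 2 := by
  intro x
  have hv_per : Function.Periodic v (2 * π) := hper
  have hintegrand_per : Function.Periodic (fun y =>
      cosh ((x - y) - 2 * π * (⌊(x - y) / (2 * π)⌋ : ℤ) - π) *
        (v y ^ 2 + deriv v y ^ 2 / 2)) (2 * π) := by
    intro y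
    dsimp only
    rw [sub_add_eq_sub_sub, periodic_cosh_sub_floor.sub_eq, hv_per, hv_per.deriv]
  have hshift := hintegrand_per.intervalIntegral_add_eq 0 (x - 2 * π)
  rw [zero_add, sub_add_cancel] at hshift
  calc (1 / (2 * sinh π)) * ∫ y in (0 : ℝ)..(2 * π),
        cosh ((x - y) - 2 * π * (⌊(x - y) / (2 * π)⌋ : ℤ) - π) * (v y ^ 2 + deriv v y ^ 2 / 2)
      = (1 / (2 * sinh π)) * ∫ y in (x - 2 * π)..x,
          cosh (y - (x - π)) * (v y ^ 2 + deriv v y ^ 2 / 2) := by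
        rw [hshift]
        refine congrArg _ (integral_congr_ae (ae_of_all _ fun y hy => ?_))
        rw [Set.uIoc_of_le (by linarith [pi_pos])] at hy
        rw [cosh_sub_floor_eq_of_nonneg_of_lt (by linarith [hy.2]) (by linarith [hy.1]), ← cosh_neg]
        ring_nf
    _ ≥ (1 / (2 * sinh π)) * (sinh (x - (x - π)) * v x ^ 2 / 2
          - sinh (x - 2 * π - (x - π)) * v (x - 2 * π) ^ 2 / 2) := by
        gcongr
        exact sinh_mul_sq_sub_le_integral_cosh_mul hv _ (by linarith [pi_pos])
    _ = v x ^ 2 / 2 := by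
        rw [hv_per.sub_eq, show x - 2 * π - (x - π) = -π by ring, sinh_neg, sub_sub_cancel]
        field_simp [(sinh_pos_iff.2 pi_pos).ne']
        ring
end

section
/- Let v : ℝ → ℝ be 2π-periodic and twice continuously differentiable, and set V(y) = v(y) − v''(y). Then for every x ∈ ℝ: v(x) + v'(x) = (1/(2 sinh π)) ∫₀^{2π} exp(x − y − 2π⌊(x−y)/(2π)⌋ − π) V(y) dy, and v(x) − v'(x) = (1/(2 sinh π)) ∫₀^{2π} exp(y − x + 2π⌊(x−y)/(2π)⌋ + π) V(y) dy. -/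
/-!
Both formulas are the fundamental theorem of calculus over one period, since
`d/dy [-e^(c-y) (v + v')(y)] = e^(c-y) (v - v'')(y)` and
`d/dy [e^(y-c) (v - v')(y)] = e^(y-c) (v - v'')(y)`. Integrating over `[x - 2π, x]` with
`c = x - π` and using periodicity of `v` and `v'` gives
`(e^π - e^(-π)) (v ± v')(x) = 2 sinh π (v ± v')(x)`. The floor term reduces `x - y` to its
representative in `[0, 2π)`, which is `x - y` itself on `(x - 2π, x]`, and the kernel integrand is
`2π`-periodic in `y`, so the integral over `[0, 2π]` equals the one over `[x - 2π, x]`.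
-/

open Real MeasureTheory intervalIntegral

theorem Function.Periodic.intervalIntegral_sawtooth_mul {V : ℝ → ℝ} {p : ℝ}
    (hV : Function.Periodic V p) (hp : 0 < p) (g : ℝ → ℝ) (x : ℝ) :
    ∫ y in (0 : ℝ)..p, g (x - y - p * ⌊(x - y) / p⌋) * V y =
      ∫ y in x - p..x, g (x - y) * V y := by
  have hperiodic : Function.Periodic (fun y => g (x - y - p * ⌊(x - y) / p⌋) * V y) p := by
    intro y
    have hfloor : ⌊(x - (y + p)) / p⌋ = ⌊(x - y) / p⌋ - 1 := by
      rw [← Int.floor_sub_one]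
      congr 1
      field_simp
      ring
    simp only [hV y, hfloor, Int.cast_sub, Int.cast_one]
    ring_nf
  have hshift := hperiodic.intervalIntegral_add_eq (x - p) 0
  rw [sub_add_cancel, zero_add] at hshift
  rw [← hshift, integral_of_le (by linarith), integral_of_le (by linarith)]
  refine setIntegral_congr_fun measurableSet_Ioc fun y ⟨hy₁, hy₂⟩ => ?_
  have hfloor : ⌊(x - y) / p⌋ = 0 :=
    Int.floor_eq_zero_iff.mpr ⟨div_nonneg (by linarith) hp.le, (div_lt_one hp).mpr (by linarith)⟩
  simp [hfloor]

theorem integral_exp_const_sub_mul_self_sub_deriv_deriv {v : ℝ → ℝ} (hv : ContDiff ℝ 2 v)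
    (c a b : ℝ) :
    ∫ y in a..b, exp (c - y) * (v y - deriv (deriv v) y) =
      exp (c - a) * (v a + deriv v a) - exp (c - b) * (v b + deriv v b) := by
  have hv₁ : ContDiff ℝ 1 (deriv v) := hv.deriv'
  have hderiv : ∀ y, HasDerivAt (fun y => -(exp (c - y) * (v y + deriv v y)))
      (exp (c - y) * (v y - deriv (deriv v) y)) y := by
    intro y
    have hexp : HasDerivAt (fun y => exp (c - y)) (-exp (c - y)) y := by
      simpa using ((hasDerivAt_id y).const_sub c).exp
    have hsum : HasDerivAt (fun y => v y + deriv v y) (deriv v y + deriv (deriv v) y) y :=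
      ((hv.differentiable two_ne_zero y).hasDerivAt).add
        ((hv₁.differentiable one_ne_zero y).hasDerivAt)
    exact (hexp.mul hsum).neg.congr_deriv (by ring)
  have hv₂ : Continuous (deriv (deriv v)) := hv₁.continuous_deriv le_rfl
  have hv₀ : Continuous v := hv.continuous
  rw [integral_eq_sub_of_hasDerivAt (fun y _ => hderiv y)
    (Continuous.intervalIntegrable (by fun_prop) _ _)]
  ring

theorem integral_exp_sub_const_mul_self_sub_deriv_deriv {v : ℝ → ℝ} (hv : ContDiff ℝ 2 v)
    (c a b : ℝ) :
    ∫ y in a..b, exp (y - c) * (v y - deriv (deriv v) y) =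
      exp (b - c) * (v b - deriv v b) - exp (a - c) * (v a - deriv v a) := by
  have hv₁ : ContDiff ℝ 1 (deriv v) := hv.deriv'
  have hderiv : ∀ y, HasDerivAt (fun y => exp (y - c) * (v y - deriv v y))
      (exp (y - c) * (v y - deriv (deriv v) y)) y := by
    intro y
    have hexp : HasDerivAt (fun y => exp (y - c)) (exp (y - c)) y := by
      simpa using ((hasDerivAt_id y).sub_const c).exp
    have hdiff : HasDerivAt (fun y => v y - deriv v y) (deriv v y - deriv (deriv v) y) y :=
      ((hv.differentiable two_ne_zero y).hasDerivAt).sub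
        ((hv₁.differentiable one_ne_zero y).hasDerivAt)
    exact (hexp.mul hdiff).congr_deriv (by ring)
  have hv₂ : Continuous (deriv (deriv v)) := hv₁.continuous_deriv le_rfl
  have hv₀ : Continuous v := hv.continuous
  exact integral_eq_sub_of_hasDerivAt (fun y _ => hderiv y)
    (Continuous.intervalIntegrable (by fun_prop) _ _)

/-- The kernel representation formulas (6.6)–(6.7) for v ± v_x in terms of the
momentum variable V = v − v_xx, for a C² 2π-periodic function v on the torus. -/
theorem kernel_representation_v_pm_vx (v : ℝ → ℝ) (hv : ContDiff ℝ 2 v)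
    (hper : ∀ x, v (x + 2 * π) = v x) (V : ℝ → ℝ)
    (hV : ∀ y, V y = v y - iteratedDeriv 2 v y) :
    ∀ x : ℝ,
      (v x + deriv v x = (1 / (2 * Real.sinh π)) *
        ∫ y in (0 : ℝ)..(2 * π),
          Real.exp (x - y - 2 * π * (⌊(x - y) / (2 * π)⌋ : ℤ) - π) * V y) ∧
      (v x - deriv v x = (1 / (2 * Real.sinh π)) *
        ∫ y in (0 : ℝ)..(2 * π),
          Real.exp (y - x + 2 * π * (⌊(x - y) / (2 * π)⌋ : ℤ) + π) * V y) := by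
  intro x
  have hvper : Function.Periodic v (2 * π) := hper
  obtain rfl : V = fun y => v y - deriv (deriv v) y :=
    funext fun y => by rw [hV, iteratedDeriv_succ, iteratedDeriv_one]
  have hVper : Function.Periodic (fun y => v y - deriv (deriv v) y) (2 * π) := fun y => by
    simp only [hvper y, hvper.deriv.deriv y]
  have hsinh : 2 * sinh π ≠ 0 := by positivity
  have hsinh_eq : exp π - exp (-π) = 2 * sinh π := by rw [sinh_eq]; ring
  constructor
  · have hkernel := hVper.intervalIntegral_sawtooth_mul two_pi_pos (fun s => exp (s - π)) x
    beta_reduce at hkernel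
    rw [hkernel]
    simp_rw [sub_right_comm x _ π]
    rw [integral_exp_const_sub_mul_self_sub_deriv_deriv hv, hvper.sub_eq, hvper.deriv.sub_eq,
      show x - π - (x - 2 * π) = π by ring, show x - π - x = -π by ring,
      one_div, eq_inv_mul_iff_mul_eq₀ hsinh, ← hsinh_eq]
    ring
  · have hkernel := hVper.intervalIntegral_sawtooth_mul two_pi_pos (fun s => exp (π - s)) x
    beta_reduce at hkernel
    have harg : ∀ y, y - x + 2 * π * ⌊(x - y) / (2 * π)⌋ + π =
        π - (x - y - 2 * π * ⌊(x - y) / (2 * π)⌋) := fun y => by ring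
    have harg' : ∀ y, π - (x - y) = y - (x - π) := fun y => by ring
    simp_rw [harg, hkernel, harg']
    rw [integral_exp_sub_const_mul_self_sub_deriv_deriv hv, hvper.sub_eq, hvper.deriv.sub_eq,
      show x - (x - π) = π by ring, show x - 2 * π - (x - π) = -π by ring,
      one_div, eq_inv_mul_iff_mul_eq₀ hsinh, ← hsinh_eq]
    ring
end

section
/- Let T > 0 and let g : [0,T) × ℝ → ℝ be continuous and 2π-periodic in its second variable, such that the partial derivative ∂ₜg exists and is continuous on [0,T) × ℝ. Define M(t) = min_{x ∈ [0,2π]} g(t,x). Then: (i) for every t ∈ [0,T) there exists z(t) ∈ [0,2π] with M(t) = g(t, z(t)); (ii) M is locally Lipschitz on [0,T), hence differentiable at almost every t ∈ (0,T); and (iii) at every point t of differentiability of M, M'(t) = ∂ₜg(t, z) for every z ∈ [0,2π] satisfying g(t,z) = M(t). -/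
open Real MeasureTheory Set
open scoped NNReal Topology

/-!
Bounding `∂ₜg` on a compact time interval times `[0, 2π]` makes the functions `t ↦ g(t, x)`
uniformly Lipschitz there, and an infimum of uniformly Lipschitz functions is Lipschitz with the
same constant; Rademacher's theorem (via bounded variation) then gives a.e. differentiability.
If `M` is differentiable at `t` and `g(t, z) = M(t)`, then `s ↦ g(s, z) - M(s)` is nonnegative and
vanishes at `t`, so its derivative there is zero.
-/

section InfOverCompact

variable {α β : Type*} [TopologicalSpace α] [PseudoMetricSpace β] {K : Set α}

theorem LipschitzOnWith.sInf_image {s : Set β} {g : β → α → ℝ} {L : ℝ≥0}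
    (hK : IsCompact K) (hKne : K.Nonempty) (hcont : ∀ t ∈ s, ContinuousOn (g t) K)
    (hlip : ∀ x ∈ K, LipschitzOnWith L (fun t => g t x) s) :
    LipschitzOnWith L (fun t => sInf (g t '' K)) s := by
  refine LipschitzOnWith.of_le_add_mul L fun t ht u hu => ?_
  obtain ⟨z, hz, hmin, -⟩ := hK.exists_sInf_image_eq_and_le hKne (hcont u hu)
  calc sInf (g t '' K) ≤ g t z :=
        csInf_le (hK.bddBelow_image (hcont t ht)) (mem_image_of_mem _ hz)
    _ ≤ g u z + L * dist t u := by
        have := (hlip z hz).dist_le_mul t ht u hu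
        rw [Real.dist_eq] at this
        linarith [le_abs_self (g t z - g u z)]
    _ = sInf (g u '' K) + L * dist t u := by rw [hmin]

theorem exists_lipschitzOnWith_of_hasDerivWithinAt {I : Set ℝ} {f f' : ℝ → α → ℝ}
    (hK : IsCompact K) {a b : ℝ} (hab : Icc a b ⊆ I)
    (hf : ∀ t ∈ I, ∀ x ∈ K, HasDerivWithinAt (fun s => f s x) (f' t x) I t)
    (hf' : ContinuousOn (fun p : ℝ × α => f' p.1 p.2) (I ×ˢ K)) :
    ∃ L : ℝ≥0, ∀ x ∈ K, LipschitzOnWith L (fun t => f t x) (Icc a b) := by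
  obtain ⟨C, hC⟩ := (isCompact_Icc.prod hK).exists_bound_of_continuousOn
    (hf'.mono (prod_mono hab subset_rfl))
  refine ⟨C.toNNReal, fun x hx => (convex_Icc a b).lipschitzOnWith_of_nnnorm_hasDerivWithin_le
    (fun t ht => (hf t (hab ht) x hx).mono hab) fun t ht => ?_⟩
  rw [← NNReal.coe_le_coe, coe_nnnorm]
  exact (hC (t, x) ⟨ht, hx⟩).trans (Real.le_coe_toNNReal C)

end InfOverCompact

theorem ae_differentiableAt_of_lipschitzOnWith_Icc {f : ℝ → ℝ} {s : Set ℝ} (hs : IsOpen s)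
    (hf : ∀ a ∈ s, ∀ b ∈ s, ∃ L, LipschitzOnWith L f (Icc a b)) :
    ∀ᵐ t ∂volume.restrict s, DifferentiableAt ℝ f t := by
  have hbv : LocallyBoundedVariationOn f s := fun a b ha hb => by
    obtain ⟨L, hL⟩ := hf a ha b hb
    rcases le_or_gt a b with hab | hab
    · exact (hL.locallyBoundedVariationOn a b ⟨le_rfl, hab⟩ ⟨hab, le_rfl⟩).mono
        fun t ht => ⟨ht.2, ht.2⟩
    · simp [BoundedVariationOn, Icc_eq_empty_of_lt hab]
  filter_upwards [hbv.ae_differentiableWithinAt hs.measurableSet, ae_restrict_mem hs.measurableSet]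
    with t hdiff hts
  exact hdiff.differentiableAt (hs.mem_nhds hts)

theorem deriv_eq_of_eventuallyLE_of_eq {f φ : ℝ → ℝ} {t φ' : ℝ} (hf : DifferentiableAt ℝ f t)
    (hφ : HasDerivAt φ φ' t) (hle : f ≤ᶠ[𝓝 t] φ) (heq : f t = φ t) : deriv f t = φ' := by
  have hmin : IsLocalMin (φ - f) t := by
    filter_upwards [hle] with s hs
    simp only [Pi.sub_apply, heq, sub_self, sub_nonneg, hs]
  linarith [hmin.hasDerivAt_eq_zero (hφ.sub hf.hasDerivAt)]

theorem constantin_escher_lemma_general (T : ℝ) (g gt : ℝ → ℝ → ℝ)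
    (hg : ContinuousOn (fun p : ℝ × ℝ => g p.1 p.2) (Set.Ico 0 T ×ˢ Set.univ))
    (hgt : ∀ t ∈ Set.Ico (0 : ℝ) T, ∀ x : ℝ,
      HasDerivWithinAt (fun s => g s x) (gt t x) (Set.Ico 0 T) t)
    (hgtc : ContinuousOn (fun p : ℝ × ℝ => gt p.1 p.2) (Set.Ico 0 T ×ˢ Set.univ))
    (M : ℝ → ℝ) (hM : ∀ t, M t = sInf (g t '' Set.Icc 0 (2 * π))) :
    (∀ t ∈ Set.Ico (0 : ℝ) T, ∃ z ∈ Set.Icc (0 : ℝ) (2 * π), M t = g t z) ∧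
    (∀ a b : ℝ, 0 ≤ a → b < T → ∃ K : NNReal, LipschitzOnWith K M (Set.Icc a b)) ∧
    (∀ᵐ t ∂(volume.restrict (Set.Ioo 0 T)), DifferentiableAt ℝ M t) ∧
    (∀ t ∈ Set.Ioo (0 : ℝ) T, DifferentiableAt ℝ M t →
      ∀ z ∈ Set.Icc (0 : ℝ) (2 * π), g t z = M t → deriv M t = gt t z) := by
  obtain rfl : M = fun t => sInf (g t '' Icc 0 (2 * π)) := funext hM
  have hK : IsCompact (Icc (0 : ℝ) (2 * π)) := isCompact_Icc
  have hKne : (Icc (0 : ℝ) (2 * π)).Nonempty := nonempty_Icc.2 (by positivity)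
  have hslice : ∀ t ∈ Ico 0 T, ContinuousOn (g t) (Icc 0 (2 * π)) := fun t ht =>
    (hg.mono (prod_mono subset_rfl (subset_univ _))).uncurry_left t ht
  have hlip : ∀ a b : ℝ, 0 ≤ a → b < T →
      ∃ K : ℝ≥0, LipschitzOnWith K (fun t => sInf (g t '' Icc 0 (2 * π))) (Icc a b) := by
    intro a b ha hb
    have hab : Icc a b ⊆ Ico 0 T := fun t ht => ⟨ha.trans ht.1, ht.2.trans_lt hb⟩
    obtain ⟨L, hL⟩ := exists_lipschitzOnWith_of_hasDerivWithinAt hK hab (fun t ht x _ => hgt t ht x)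
      (hgtc.mono (prod_mono subset_rfl (subset_univ _)))
    exact ⟨L, .sInf_image hK hKne (fun t ht => hslice t (hab ht)) hL⟩
  refine ⟨fun t ht => ?_, hlip,
    ae_differentiableAt_of_lipschitzOnWith_Icc isOpen_Ioo fun a ha b hb => hlip a b ha.1.le hb.2,
    fun t ht hdiff z hz hgz => ?_⟩
  · obtain ⟨z, hz, hmin, -⟩ := hK.exists_sInf_image_eq_and_le hKne (hslice t ht)
    exact ⟨z, hz, hmin⟩
  · refine deriv_eq_of_eventuallyLE_of_eq hdiff
      ((hgt t (Ioo_subset_Ico_self ht) z).hasDerivAt (Ico_mem_nhds ht.1 ht.2)) ?_ hgz.symm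
    filter_upwards [Ioo_mem_nhds ht.1 ht.2] with s hs
    exact csInf_le (hK.bddBelow_image (hslice s (Ioo_subset_Ico_self hs))) (mem_image_of_mem _ hz)

/-- The periodic version of the Constantin–Escher differentiability lemma
(Lemma 3.7): for g continuous on [0,T)×ℝ, 2π-periodic in x, with continuous
time derivative gt, the minimum function M(t) = min_{x∈[0,2π]} g(t,x) is
attained, locally Lipschitz (hence differentiable a.e.), and at every point of
differentiability its derivative equals gt(t,z) for any minimizer z. -/
theorem constantin_escher_lemma (T : ℝ) (hT : 0 < T) (g gt : ℝ → ℝ → ℝ)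
    (hg : ContinuousOn (fun p : ℝ × ℝ => g p.1 p.2) (Set.Ico 0 T ×ˢ Set.univ))
    (hper : ∀ t x, g t (x + 2 * π) = g t x)
    (hgt : ∀ t ∈ Set.Ico (0 : ℝ) T, ∀ x : ℝ,
      HasDerivWithinAt (fun s => g s x) (gt t x) (Set.Ico 0 T) t)
    (hgtc : ContinuousOn (fun p : ℝ × ℝ => gt p.1 p.2) (Set.Ico 0 T ×ˢ Set.univ))
    (M : ℝ → ℝ) (hM : ∀ t, M t = sInf (g t '' Set.Icc 0 (2 * π))) :
    (∀ t ∈ Set.Ico (0 : ℝ) T, ∃ z ∈ Set.Icc (0 : ℝ) (2 * π), M t = g t z) ∧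
    (∀ a b : ℝ, 0 ≤ a → b < T → ∃ K : NNReal, LipschitzOnWith K M (Set.Icc a b)) ∧
    (∀ᵐ t ∂(volume.restrict (Set.Ioo 0 T)), DifferentiableAt ℝ M t) ∧
    (∀ t ∈ Set.Ioo (0 : ℝ) T, DifferentiableAt ℝ M t →
      ∀ z ∈ Set.Icc (0 : ℝ) (2 * π), g t z = M t → deriv M t = gt t z) :=
  constantin_escher_lemma_general T g gt hg hgt hgtc M hM
end

section
/- Let T > 0, γ ∈ ℝ, and β : [0,T) → ℝ continuous. Let v : [0,T) × ℝ → ℝ be 2π-periodic in x and smooth enough that V := v − v_xx and its partial derivatives V_t, V_x are continuous, and suppose V satisfies pointwise V_t + (β(t)v − γ) V_x + 2β(t) V v_x = 0 on [0,T) × ℝ. Let q : [0,T) × ℝ → ℝ satisfy ∂ₜq(t,x) = β(t) v(t, q(t,x)) − γ and q(0,x) = x, where ∂ₜq, ∂ₓq and ∂ₜ∂ₓq = ∂ₓ∂ₜq exist and are continuous. Then for all (t,x) ∈ [0,T) × ℝ: ∂ₓq(t,x) = exp( ∫₀ᵗ β(s) v_x(s, q(s,x)) ds ) > 0, and V(t,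 q(t,x)) · (∂ₓq(t,x))² = V(0,x). -/
/-!
Differentiating `∂ₓq` in time gives the linear equation `(∂ₓq)' = β v_x(t, q) ∂ₓq` with
`∂ₓq(0) = 1`, whose solution is the exponential of the integral of the coefficient. Along a
characteristic the chain rule gives `d/dt V(t, q) = V_t + V_x ∂ₜq`, and then the equation for
`V` says exactly that `V(t, q) (∂ₓq)²` has zero time derivative.

Only the time derivative of `V` at a point and a continuous `V_x` are available, so this chain
rule is proved by a mean value estimate in the space variable.
-/

open Real MeasureTheory Set intervalIntegral Filter Asymptotics Topology

theorem isLittleO_sub_sub_deriv_snd {V Vx : ℝ → ℝ → ℝ} {Q : ℝ → ℝ} {s : Set ℝ} {b : ℝ}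
    (hVx : ∀ u ∈ s, ∀ y, HasDerivAt (V u) (Vx u y) y)
    (hVxc : ContinuousWithinAt (fun p : ℝ × ℝ => Vx p.1 p.2) (s ×ˢ univ) (b, Q b))
    (hQ : ContinuousWithinAt Q s b) :
    (fun u => V u (Q u) - V u (Q b) - Vx b (Q b) * (Q u - Q b)) =o[𝓝[s] b]
      fun u => Q u - Q b := by
  refine isLittleO_iff.2 fun ε hε => ?_
  obtain ⟨δ, hδ, hVx_near⟩ := Metric.continuousWithinAt_iff.1 hVxc ε hε
  have hu_near : ∀ᶠ u in 𝓝[s] b, dist u b < δ :=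
    nhdsWithin_le_nhds (Metric.ball_mem_nhds b hδ)
  have hQ_near : ∀ᶠ u in 𝓝[s] b, dist (Q u) (Q b) < δ := hQ (Metric.ball_mem_nhds _ hδ)
  filter_upwards [hu_near, hQ_near, self_mem_nhdsWithin] with u hub hQub hus
  have hslope : ∀ y ∈ uIcc (Q b) (Q u), ‖Vx u y - Vx b (Q b)‖ ≤ ε := by
    intro y hy
    have hyQ : dist y (Q b) < δ :=
      (abs_sub_left_of_mem_uIcc hy).trans_lt (by rwa [← Real.dist_eq])
    have hdist : dist (u, y) (b, Q b) < δ := by rw [Prod.dist_eq]; exact max_lt hub hyQ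
    exact (hVx_near (x := (u, y)) ⟨hus, mem_univ y⟩ hdist).le
  have hmvt := Convex.norm_image_sub_le_of_norm_hasDerivWithin_le
    (fun y _ => ((hVx u hus y).sub (hasDerivAt_mul_const (Vx b (Q b)))).hasDerivWithinAt)
    hslope (convex_uIcc _ _) left_mem_uIcc right_mem_uIcc
  refine le_of_eq_of_le ?_ hmvt
  simp only [Pi.sub_apply]
  congr 1
  ring

theorem hasDerivWithinAt_comp_of_continuousWithinAt_deriv_snd {V Vx : ℝ → ℝ → ℝ}
    {Q : ℝ → ℝ} {s : Set ℝ} {b Vt Q' : ℝ}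
    (hVt : HasDerivWithinAt (fun u => V u (Q b)) Vt s b)
    (hVx : ∀ u ∈ s, ∀ y, HasDerivAt (V u) (Vx u y) y)
    (hVxc : ContinuousWithinAt (fun p : ℝ × ℝ => Vx p.1 p.2) (s ×ˢ univ) (b, Q b))
    (hQ : HasDerivWithinAt Q Q' s b) :
    HasDerivWithinAt (fun u => V u (Q u)) (Vt + Vx b (Q b) * Q') s b := by
  have hspace := (isLittleO_sub_sub_deriv_snd hVx hVxc hQ.continuousWithinAt).trans_isBigO
    hQ.hasFDerivWithinAt.isBigO_sub
  rw [hasDerivWithinAt_iff_isLittleO] at hVt hQ ⊢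
  refine ((hVt.add hspace).add (hQ.const_mul_left (Vx b (Q b)))).congr_left fun u => ?_
  simp only [smul_eq_mul]
  ring

theorem eq_of_hasDerivWithinAt_Icc_eq_zero {f : ℝ → ℝ} {a b : ℝ} (hab : a ≤ b)
    (hf : ∀ s ∈ Icc a b, HasDerivWithinAt f 0 (Icc a b) s) : f b = f a :=
  constant_of_has_deriv_right_zero (fun s hs => (hf s hs).continuousWithinAt)
    (fun s hs => (hf s (Ico_subset_Icc_self hs)).mono_of_mem_nhdsWithin (Icc_mem_nhdsGE_of_mem hs))
    b (right_mem_Icc.2 hab)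

theorem hasDerivWithinAt_integral_Icc {E : Type*} [NormedAddCommGroup E] [NormedSpace ℝ E]
    [CompleteSpace E] {g : ℝ → E} {a b s : ℝ} (hg : ContinuousOn g (Icc a b))
    (hs : s ∈ Icc a b) :
    HasDerivWithinAt (fun u => ∫ r in a..u, g r) (g s) (Icc a b) s := by
  have : Fact (s ∈ Icc a b) := ⟨hs⟩
  exact integral_hasDerivWithinAt_right
    (hg.mono (uIcc_subset_Icc (left_mem_Icc.2 (hs.1.trans hs.2)) hs)).intervalIntegrable
    (hg.stronglyMeasurableAtFilter_nhdsWithin measurableSet_Icc s) (hg s hs)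

theorem eq_mul_exp_integral_of_hasDerivWithinAt {f g : ℝ → ℝ} {a b : ℝ} (hab : a ≤ b)
    (hg : ContinuousOn g (Icc a b))
    (hf : ∀ s ∈ Icc a b, HasDerivWithinAt f (g s * f s) (Icc a b) s) :
    f b = f a * exp (∫ s in a..b, g s) := by
  have hconst : f b * exp (-∫ r in a..b, g r) = f a * exp (-∫ r in a..a, g r) :=
    eq_of_hasDerivWithinAt_Icc_eq_zero (f := fun u => f u * exp (-∫ r in a..u, g r)) hab
      fun s hs => ((hf s hs).mul (hasDerivWithinAt_integral_Icc hg hs).neg.exp).congr_deriv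
        (by ring)
  rw [integral_same, neg_zero, exp_zero, mul_one] at hconst
  rw [← hconst, mul_assoc, ← exp_add, neg_add_cancel, exp_zero, mul_one]

theorem momentum_conservation_along_characteristics_general
    (T : ℝ) (γ : ℝ) (β : ℝ → ℝ) (hβ : ContinuousOn β (Set.Ico 0 T))
    (v vx V Vt Vx : ℝ → ℝ → ℝ)
    (hVt : ∀ t ∈ Set.Ico (0 : ℝ) T, ∀ x : ℝ,
      HasDerivWithinAt (fun s => V s x) (Vt t x) (Set.Ico 0 T) t)
    (hVx : ∀ t ∈ Set.Ico (0 : ℝ) T, ∀ x : ℝ, HasDerivAt (fun y => V t y) (Vx t x) x)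
    (hvxc : ContinuousOn (fun p : ℝ × ℝ => vx p.1 p.2) (Set.Ico 0 T ×ˢ Set.univ))
    (hVxc : ContinuousOn (fun p : ℝ × ℝ => Vx p.1 p.2) (Set.Ico 0 T ×ˢ Set.univ))
    (hpde : ∀ t ∈ Set.Ico (0 : ℝ) T, ∀ x : ℝ,
      Vt t x + (β t * v t x - γ) * Vx t x + 2 * β t * V t x * vx t x = 0)
    (q qx : ℝ → ℝ → ℝ)
    (hq0 : ∀ x, q 0 x = x)
    (hqt : ∀ t ∈ Set.Ico (0 : ℝ) T, ∀ x : ℝ,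
      HasDerivWithinAt (fun s => q s x) (β t * v t (q t x) - γ) (Set.Ico 0 T) t)
    (hqx : ∀ t ∈ Set.Ico (0 : ℝ) T, ∀ x : ℝ, HasDerivAt (fun y => q t y) (qx t x) x)
    (hqtx : ∀ t ∈ Set.Ico (0 : ℝ) T, ∀ x : ℝ,
      HasDerivWithinAt (fun s => qx s x) (β t * vx t (q t x) * qx t x) (Set.Ico 0 T) t) :
    ∀ t ∈ Set.Ico (0 : ℝ) T, ∀ x : ℝ,
      qx t x = Real.exp (∫ s in (0 : ℝ)..t, β s * vx s (q s x)) ∧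
      0 < qx t x ∧
      V t (q t x) * (qx t x) ^ 2 = V 0 x := by
  intro t ht x
  have hsub : Icc 0 t ⊆ Ico 0 T := Icc_subset_Ico_right ht.2
  have hqx0 : qx 0 x = 1 :=
    (hqx 0 ⟨le_rfl, ht.1.trans_lt ht.2⟩ x).unique (by simpa only [hq0] using hasDerivAt_id' x)
  have hvx_char : ContinuousOn (fun s => vx s (q s x)) (Ico 0 T) :=
    hvxc.comp (continuousOn_id.prodMk fun s hs => (hqt s hs x).continuousWithinAt)
      fun s hs => ⟨hs, mem_univ _⟩
  have hqx_eq : qx t x = exp (∫ s in 0..t, β s * vx s (q s x)) := by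
    simpa only [hqx0, one_mul] using eq_mul_exp_integral_of_hasDerivWithinAt
      (g := fun s => β s * vx s (q s x)) ht.1
      ((hβ.mul hvx_char).mono hsub) fun s hs => (hqtx s (hsub hs) x).mono hsub
  refine ⟨hqx_eq, hqx_eq ▸ exp_pos _, ?_⟩
  have hV_char : ∀ s ∈ Ico 0 T, HasDerivWithinAt (fun u => V u (q u x))
      (Vt s (q s x) + Vx s (q s x) * (β s * v s (q s x) - γ)) (Ico 0 T) s := fun s hs =>
    hasDerivWithinAt_comp_of_continuousWithinAt_deriv_snd (hVt s hs (q s x)) hVx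
      (hVxc (s, q s x) ⟨hs, mem_univ _⟩) (hqt s hs x)
  have hconst := eq_of_hasDerivWithinAt_Icc_eq_zero (f := fun u => V u (q u x) * qx u x ^ 2) ht.1
    fun s hs => (((hV_char s (hsub hs)).mul ((hqtx s (hsub hs) x).fun_pow 2)).mono hsub).congr_deriv
      (by linear_combination qx s x ^ 2 * hpde s (hsub hs) (q s x))
  simpa only [hq0, hqx0, one_pow, mul_one] using hconst

/-- Conservation of momentum along characteristics (Lemma 6.2): for the momentum
V = v − v_xx of a classical 2π-periodic solution of the rescaled DGH equation with
c₀ + γ = 0, satisfying V_t + (βv − γ)V_x + 2βV v_x = 0, and the Lagrangian flow q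
with ∂ₜq = β v(t,q) − γ, q(0,x) = x, one has
∂ₓq(t,x) = exp(∫₀ᵗ β v_x(s, q(s,x)) ds) > 0 and V(t,q(t,x)) (∂ₓq)² = V(0,x). -/
theorem momentum_conservation_along_characteristics
    (T : ℝ) (hT : 0 < T) (γ : ℝ) (β : ℝ → ℝ) (hβ : ContinuousOn β (Set.Ico 0 T))
    (v vx vxx V Vt Vx : ℝ → ℝ → ℝ)
    (hper : ∀ t x, v t (x + 2 * π) = v t x)
    (hvx : ∀ t ∈ Set.Ico (0 : ℝ) T, ∀ x : ℝ, HasDerivAt (fun y => v t y) (vx t x) x)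
    (hvxx : ∀ t ∈ Set.Ico (0 : ℝ) T, ∀ x : ℝ, HasDerivAt (fun y => vx t y) (vxx t x) x)
    (hVdef : ∀ t x, V t x = v t x - vxx t x)
    (hVt : ∀ t ∈ Set.Ico (0 : ℝ) T, ∀ x : ℝ,
      HasDerivWithinAt (fun s => V s x) (Vt t x) (Set.Ico 0 T) t)
    (hVx : ∀ t ∈ Set.Ico (0 : ℝ) T, ∀ x : ℝ, HasDerivAt (fun y => V t y) (Vx t x) x)
    (hvc : ContinuousOn (fun p : ℝ × ℝ => v p.1 p.2) (Set.Ico 0 T ×ˢ Set.univ))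
    (hvxc : ContinuousOn (fun p : ℝ × ℝ => vx p.1 p.2) (Set.Ico 0 T ×ˢ Set.univ))
    (hVc : ContinuousOn (fun p : ℝ × ℝ => V p.1 p.2) (Set.Ico 0 T ×ˢ Set.univ))
    (hVtc : ContinuousOn (fun p : ℝ × ℝ => Vt p.1 p.2) (Set.Ico 0 T ×ˢ Set.univ))
    (hVxc : ContinuousOn (fun p : ℝ × ℝ => Vx p.1 p.2) (Set.Ico 0 T ×ˢ Set.univ))
    (hpde : ∀ t ∈ Set.Ico (0 : ℝ) T, ∀ x : ℝ,
      Vt t x + (β t * v t x - γ) * Vx t x + 2 * β t * V t x * vx t x = 0)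
    (q qx : ℝ → ℝ → ℝ)
    (hq0 : ∀ x, q 0 x = x)
    (hqt : ∀ t ∈ Set.Ico (0 : ℝ) T, ∀ x : ℝ,
      HasDerivWithinAt (fun s => q s x) (β t * v t (q t x) - γ) (Set.Ico 0 T) t)
    (hqx : ∀ t ∈ Set.Ico (0 : ℝ) T, ∀ x : ℝ, HasDerivAt (fun y => q t y) (qx t x) x)
    (hqxc : ContinuousOn (fun p : ℝ × ℝ => qx p.1 p.2) (Set.Ico 0 T ×ˢ Set.univ))
    (hqtx : ∀ t ∈ Set.Ico (0 : ℝ) T, ∀ x : ℝ,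
      HasDerivWithinAt (fun s => qx s x) (β t * vx t (q t x) * qx t x) (Set.Ico 0 T) t) :
    ∀ t ∈ Set.Ico (0 : ℝ) T, ∀ x : ℝ,
      qx t x = Real.exp (∫ s in (0 : ℝ)..t, β s * vx s (q s x)) ∧
      0 < qx t x ∧
      V t (q t x) * (qx t x) ^ 2 = V 0 x :=
  momentum_conservation_along_characteristics_general T γ β hβ v vx V Vt Vx hVt hVx hvxc hVxc hpde q
    qx hq0 hqt hqx hqtx
end

section
/- Let T > 0, γ ∈ ℝ, and β : [0,T) → ℝ continuous. Let v : [0,T) × ℝ → ℝ be 2π-periodic in x and smooth enough that V := v − v_xx and its partial derivatives V_t, V_x are continuous, and suppose V satisfies pointwise V_t + (β(t)v − γ) V_x + 2β(t) V v_x = 0 on [0,T) × ℝ. Let q : [0,T) × ℝ → ℝ satisfy ∂ₜq(t,x) = β(t) v(t, q(t,x)) − γ and q(0,x) = x, where ∂ₜq, ∂ₓq and ∂ₜ∂ₓq = ∂ₓ∂ₜq exist and are continuous, and assume that for every t ∈ [0,T) the map x ↦ q(t,x) is surjective onto ℝ. Then: if V(0,x) > 0 for all x ∈ ℝ, then V(t,x)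 > 0 for all (t,x) ∈ [0,T) × ℝ; and if V(0,x) < 0 for all x ∈ ℝ, then V(t,x) < 0 for all (t,x) ∈ [0,T) × ℝ. -/
/-!
Along the Lagrangian flow the transport equation says exactly that
`t ↦ V(t, q(t,x)) · q_x(t,x)²` has zero time derivative, so this weighted momentum is conserved:
`V(t, q(t,x)) q_x(t,x)² = V(0,x)`. Since `q(t,·)` is onto, every point `y` is some `q(t,x)`, and
`V(t,y)` inherits the sign of `V(0,x)`. The only analytic input is the chain rule for
`s ↦ V(s, q(s,x))` from partial derivatives; since `V` is differentiable in time only within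
`[0,T)` (one-sidedly at `t = 0`), it is derived from the mean value inequality on time segments
and the joint continuity of `V_t`.
-/

open Real Set Filter Topology Asymptotics

theorem isLittleO_sub_sub_of_hasDerivWithinAt_fst {S : Set ℝ} (hS : Convex ℝ S)
    {F Ft : ℝ → ℝ → ℝ} {g : ℝ → ℝ} {t : ℝ} (ht : t ∈ S)
    (hFt : ∀ σ ∈ S, ∀ y, HasDerivWithinAt (F · y) (Ft σ y) S σ)
    (hFtc : ContinuousWithinAt (Function.uncurry Ft) (S ×ˢ univ) (t, g t))
    (hg : ContinuousWithinAt g S t) :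
    (fun s => F s (g s) - F t (g s) - (s - t) * Ft t (g t)) =o[𝓝[S] t] (fun s => s - t) := by
  rw [isLittleO_iff]
  intro ε hε
  have hpair : Tendsto (fun p : ℝ × ℝ => (p.2, g p.1)) (𝓝[S] t ×ˢ 𝓝[S] t)
      (𝓝[S ×ˢ univ] (t, g t)) :=
    tendsto_nhdsWithin_iff.2
      ⟨(tendsto_snd.mono_right nhdsWithin_le_nhds).prodMk_nhds (hg.tendsto.comp tendsto_fst),
        (tendsto_snd.eventually self_mem_nhdsWithin).mono fun p hp => ⟨hp, mem_univ _⟩⟩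
  have hnear : ∀ᶠ p in 𝓝[S] t ×ˢ 𝓝[S] t, p.2 ∈ S ∧ ‖Ft p.2 (g p.1) - Ft t (g t)‖ < ε :=
    (hpair.eventually (eventually_mem_nhdsWithin.and
      (Metric.tendsto_nhds.1 hFtc.tendsto ε hε))).mono fun p hp => ⟨hp.1.1, hp.2⟩
  have hseg : ∀ᶠ s in 𝓝[S] t, s ∈ S ∧ ∀ σ ∈ segment ℝ t s,
      σ ∈ S ∧ ‖Ft σ (g s) - Ft t (g t)‖ < ε :=
    eventually_mem_nhdsWithin.and <| hnear.segment_of_prod_nhdsWithin tendsto_const_nhds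
      (tendsto_id.mono_left nhdsWithin_le_nhds)
      (eventually_nhdsWithin_of_forall fun s hs => hS.segment_subset ht hs)
  filter_upwards [hseg] with s ⟨hs, hsegs⟩
  have hmvt := (convex_segment t s).norm_image_sub_le_of_norm_hasDerivWithin_le
    (f := fun σ => F σ (g s) - σ * Ft t (g t)) (f' := fun σ => Ft σ (g s) - Ft t (g t))
    (fun σ hσ => (((hFt σ (hsegs σ hσ).1 (g s)).mono (hS.segment_subset ht hs)).sub
      ((hasDerivWithinAt_id σ _).mul_const _)).congr_deriv (by ring))
    (fun σ hσ => (hsegs σ hσ).2.le) (left_mem_segment ℝ t s) (right_mem_segment ℝ t s)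
  calc ‖F s (g s) - F t (g s) - (s - t) * Ft t (g t)‖
      = ‖F s (g s) - s * Ft t (g t) - (F t (g s) - t * Ft t (g t))‖ := by ring_nf
    _ ≤ ε * ‖s - t‖ := hmvt

theorem hasDerivWithinAt_comp_of_partials {S : Set ℝ} (hS : Convex ℝ S)
    {F Ft : ℝ → ℝ → ℝ} {g : ℝ → ℝ} {t Fx g' : ℝ} (ht : t ∈ S)
    (hFt : ∀ σ ∈ S, ∀ y, HasDerivWithinAt (F · y) (Ft σ y) S σ)
    (hFx : HasDerivAt (F t ·) Fx (g t))
    (hFtc : ContinuousWithinAt (Function.uncurry Ft) (S ×ˢ univ) (t, g t))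
    (hg : HasDerivWithinAt g g' S t) :
    HasDerivWithinAt (fun s => F s (g s)) (Ft t (g t) + Fx * g') S t := by
  have htime := isLittleO_sub_sub_of_hasDerivWithinAt_fst hS ht hFt hFtc hg.continuousWithinAt
  have hspace := hFx.comp_hasDerivWithinAt t hg
  rw [hasDerivWithinAt_iff_isLittleO] at hspace ⊢
  exact (htime.add hspace).congr_left fun s => by
    simp only [smul_eq_mul, Function.comp_apply]; ring

theorem comp_flow_mul_sq_eq_of_transport {S : Set ℝ} (hS : Convex ℝ S)
    {V Vt Vx c cx q qx : ℝ → ℝ → ℝ} {x : ℝ}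
    (hVt : ∀ t ∈ S, ∀ y, HasDerivWithinAt (V · y) (Vt t y) S t)
    (hVx : ∀ t ∈ S, ∀ y, HasDerivAt (V t ·) (Vx t y) y)
    (hVtc : ContinuousOn (Function.uncurry Vt) (S ×ˢ univ))
    (htransport : ∀ t ∈ S, ∀ y, Vt t y + c t y * Vx t y + 2 * cx t y * V t y = 0)
    (hqt : ∀ t ∈ S, HasDerivWithinAt (q · x) (c t (q t x)) S t)
    (hqxt : ∀ t ∈ S, HasDerivWithinAt (qx · x) (cx t (q t x) * qx t x) S t)
    {s t : ℝ} (hs : s ∈ S) (ht : t ∈ S) :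
    V t (q t x) * qx t x ^ 2 = V s (q s x) * qx s x ^ 2 := by
  have hderiv : ∀ σ ∈ S, HasDerivWithinAt (fun σ => V σ (q σ x) * qx σ x ^ 2) 0 S σ := by
    intro σ hσ
    have hV := hasDerivWithinAt_comp_of_partials hS hσ hVt (hVx σ hσ _)
      (hVtc _ ⟨hσ, mem_univ _⟩) (hqt σ hσ)
    refine (hV.mul ((hqxt σ hσ).fun_pow 2)).congr_deriv ?_
    linear_combination qx σ x ^ 2 * htransport σ hσ (q σ x)
  simpa [sub_eq_zero] using
    hS.norm_image_sub_le_of_norm_hasDerivWithin_le hderiv (C := 0) (by simp) hs ht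

theorem momentum_sign_propagation_general
    (T : ℝ) (γ : ℝ) (β : ℝ → ℝ)
    (v vx V Vt Vx : ℝ → ℝ → ℝ)
    (hVt : ∀ t ∈ Set.Ico (0 : ℝ) T, ∀ x : ℝ,
      HasDerivWithinAt (fun s => V s x) (Vt t x) (Set.Ico 0 T) t)
    (hVx : ∀ t ∈ Set.Ico (0 : ℝ) T, ∀ x : ℝ, HasDerivAt (fun y => V t y) (Vx t x) x)
    (hVtc : ContinuousOn (fun p : ℝ × ℝ => Vt p.1 p.2) (Set.Ico 0 T ×ˢ Set.univ))
    (hpde : ∀ t ∈ Set.Ico (0 : ℝ) T, ∀ x : ℝ,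
      Vt t x + (β t * v t x - γ) * Vx t x + 2 * β t * V t x * vx t x = 0)
    (q qx : ℝ → ℝ → ℝ)
    (hq0 : ∀ x, q 0 x = x)
    (hqt : ∀ t ∈ Set.Ico (0 : ℝ) T, ∀ x : ℝ,
      HasDerivWithinAt (fun s => q s x) (β t * v t (q t x) - γ) (Set.Ico 0 T) t)
    (hqx : ∀ t ∈ Set.Ico (0 : ℝ) T, ∀ x : ℝ, HasDerivAt (fun y => q t y) (qx t x) x)
    (hqtx : ∀ t ∈ Set.Ico (0 : ℝ) T, ∀ x : ℝ,
      HasDerivWithinAt (fun s => qx s x) (β t * vx t (q t x) * qx t x) (Set.Ico 0 T) t)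
    (hsurj : ∀ t ∈ Set.Ico (0 : ℝ) T, Function.Surjective (fun x => q t x)) :
    ((∀ x : ℝ, 0 < V 0 x) → ∀ t ∈ Set.Ico (0 : ℝ) T, ∀ x : ℝ, 0 < V t x) ∧
    ((∀ x : ℝ, V 0 x < 0) → ∀ t ∈ Set.Ico (0 : ℝ) T, ∀ x : ℝ, V t x < 0) := by
  have hconserved : ∀ t ∈ Ico (0 : ℝ) T, ∀ x, V t (q t x) * qx t x ^ 2 = V 0 x := by
    intro t ht x
    have h0 : (0 : ℝ) ∈ Ico 0 T := ⟨le_rfl, ht.1.trans_lt ht.2⟩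
    have hqx0 : qx 0 x = 1 := (hqx 0 h0 x).unique (by simpa only [hq0] using hasDerivAt_id' x)
    simpa [hq0, hqx0] using comp_flow_mul_sq_eq_of_transport (convex_Ico 0 T)
      (c := fun t y => β t * v t y - γ) (cx := fun t y => β t * vx t y) hVt hVx hVtc
      (fun t ht y => by linear_combination hpde t ht y)
      (fun t ht => hqt t ht x) (fun t ht => hqtx t ht x) h0 ht
  refine ⟨fun hpos t ht y => ?_, fun hneg t ht y => ?_⟩ <;> obtain ⟨x, rfl⟩ := hsurj t ht y
  · exact pos_of_mul_pos_left (hconserved t ht x ▸ hpos x) (sq_nonneg _)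
  · exact neg_of_mul_neg_left (hconserved t ht x ▸ hneg x) (sq_nonneg _)

/-- Sign propagation for the momentum (Lemma 6.2): the sign of V = v − v_xx is
preserved in time along the rescaled DGH flow with c₀ + γ = 0, given the
Lagrangian flow map q(t,·) is surjective for each t. -/
theorem momentum_sign_propagation
    (T : ℝ) (hT : 0 < T) (γ : ℝ) (β : ℝ → ℝ) (hβ : ContinuousOn β (Set.Ico 0 T))
    (v vx vxx V Vt Vx : ℝ → ℝ → ℝ)
    (hper : ∀ t x, v t (x + 2 * π) = v t x)
    (hvx : ∀ t ∈ Set.Ico (0 : ℝ) T, ∀ x : ℝ, HasDerivAt (fun y => v t y) (vx t x) x)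
    (hvxx : ∀ t ∈ Set.Ico (0 : ℝ) T, ∀ x : ℝ, HasDerivAt (fun y => vx t y) (vxx t x) x)
    (hVdef : ∀ t x, V t x = v t x - vxx t x)
    (hVt : ∀ t ∈ Set.Ico (0 : ℝ) T, ∀ x : ℝ,
      HasDerivWithinAt (fun s => V s x) (Vt t x) (Set.Ico 0 T) t)
    (hVx : ∀ t ∈ Set.Ico (0 : ℝ) T, ∀ x : ℝ, HasDerivAt (fun y => V t y) (Vx t x) x)
    (hvc : ContinuousOn (fun p : ℝ × ℝ => v p.1 p.2) (Set.Ico 0 T ×ˢ Set.univ))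
    (hvxc : ContinuousOn (fun p : ℝ × ℝ => vx p.1 p.2) (Set.Ico 0 T ×ˢ Set.univ))
    (hVc : ContinuousOn (fun p : ℝ × ℝ => V p.1 p.2) (Set.Ico 0 T ×ˢ Set.univ))
    (hVtc : ContinuousOn (fun p : ℝ × ℝ => Vt p.1 p.2) (Set.Ico 0 T ×ˢ Set.univ))
    (hVxc : ContinuousOn (fun p : ℝ × ℝ => Vx p.1 p.2) (Set.Ico 0 T ×ˢ Set.univ))
    (hpde : ∀ t ∈ Set.Ico (0 : ℝ) T, ∀ x : ℝ,
      Vt t x + (β t * v t x - γ) * Vx t x + 2 * β t * V t x * vx t x = 0)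
    (q qx : ℝ → ℝ → ℝ)
    (hq0 : ∀ x, q 0 x = x)
    (hqt : ∀ t ∈ Set.Ico (0 : ℝ) T, ∀ x : ℝ,
      HasDerivWithinAt (fun s => q s x) (β t * v t (q t x) - γ) (Set.Ico 0 T) t)
    (hqx : ∀ t ∈ Set.Ico (0 : ℝ) T, ∀ x : ℝ, HasDerivAt (fun y => q t y) (qx t x) x)
    (hqxc : ContinuousOn (fun p : ℝ × ℝ => qx p.1 p.2) (Set.Ico 0 T ×ˢ Set.univ))
    (hqtx : ∀ t ∈ Set.Ico (0 : ℝ) T, ∀ x : ℝ,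
      HasDerivWithinAt (fun s => qx s x) (β t * vx t (q t x) * qx t x) (Set.Ico 0 T) t)
    (hsurj : ∀ t ∈ Set.Ico (0 : ℝ) T, Function.Surjective (fun x => q t x)) :
    ((∀ x : ℝ, 0 < V 0 x) → ∀ t ∈ Set.Ico (0 : ℝ) T, ∀ x : ℝ, 0 < V t x) ∧
    ((∀ x : ℝ, V 0 x < 0) → ∀ t ∈ Set.Ico (0 : ℝ) T, ∀ x : ℝ, V t x < 0) :=
  momentum_sign_propagation_general T γ β v vx V Vt Vx hVt hVx hVtc hpde q qx hq0 hqt hqx hqtx hsurj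
end

section
/- Let T > 0, γ ∈ ℝ, and β : [0,T) → ℝ continuous. Let v : [0,T) × ℝ → ℝ be 2π-periodic in x and smooth enough that V := v − v_xx and its partial derivatives V_t, V_x are continuous, and suppose V satisfies pointwise V_t + (β(t)v − γ) V_x + 2β(t) V v_x = 0 on [0,T) × ℝ. Then for every t ∈ [0,T): d/dt ∫₀^{2π} V(t,x)² dx = −3β(t) ∫₀^{2π} V(t,x)² v_x(t,x) dx. Consequently, if K ≥ 0 and β(t) v_x(t,x) ≥ −K for all (t,x) ∈ [0,T) × ℝ, then ∫₀^{2π} V(t,x)² dx ≤ e^{3Kt} ∫₀^{2π} V(0,x)² dx for all t ∈ [0,T). -/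
/-!
Multiplying the momentum equation by `2V` gives `2 V V_t = -∂ₓ((βv - γ) V²) - 3β V² v_x`,
and the flux term integrates to zero over a period. Differentiating the energy under the
integral sign (Fubini plus the fundamental theorem of calculus, using the joint continuity of
`V V_t`) gives the identity. If `β v_x ≥ -K`, its right-hand side is at most `3K` times the
energy, and Grönwall's inequality gives the exponential bound.
-/

open Real MeasureTheory Set intervalIntegral
open Function

theorem Function.Periodic.periodic_of_hasDerivAt {E : Type*} [NormedAddCommGroup E]
    [NormedSpace ℝ E] {f f' : ℝ → E} {c : ℝ} (hf : Periodic f c)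
    (hderiv : ∀ x, HasDerivAt f (f' x) x) : Periodic f' c := fun x => by
  have hshift := (hderiv (x + c)).comp_add_const x c
  rw [show (fun y => f (y + c)) = f from funext hf] at hshift
  exact hshift.unique (hderiv x)

theorem Function.Periodic.intervalIntegral_deriv_eq_zero {E : Type*} [NormedAddCommGroup E]
    [NormedSpace ℝ E] [CompleteSpace E] {f f' : ℝ → E} {c : ℝ} (hf : Periodic f c)
    (hderiv : ∀ x, HasDerivAt f (f' x) x) (hint : IntervalIntegrable f' volume 0 c) :
    ∫ x in (0 : ℝ)..c, f' x = 0 := by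
  rw [integral_eq_sub_of_hasDerivAt (fun x _ => hderiv x) hint, ← zero_add c, hf 0, sub_self]

theorem ContinuousOn.intervalIntegral_of_prod_univ {f : ℝ → ℝ → ℝ} {s : Set ℝ}
    (hf : ContinuousOn (uncurry f) (s ×ˢ univ)) (c d : ℝ) :
    ContinuousOn (fun t => ∫ x in c..d, f t x) s := by
  rw [continuousOn_iff_continuous_domRestrict]
  have hrestrict : Continuous (uncurry fun (t : s) x => f t x) :=
    hf.comp_continuous (continuous_subtype_val.prodMap continuous_id) fun p => ⟨p.1.2, trivial⟩
  exact continuous_parametric_intervalIntegral_of_continuous' hrestrict c d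

section ParametricIntegral

variable {F F' : ℝ → ℝ → ℝ} {a b c d : ℝ}

theorem intervalIntegral_sub_eq_intervalIntegral_intervalIntegral
    (hF : ∀ s ∈ Icc a b, IntervalIntegrable (F s) volume c d)
    (hF' : ContinuousOn (uncurry F') (Icc a b ×ˢ univ))
    (hderiv : ∀ x, ∀ s ∈ Icc a b, HasDerivWithinAt (F · x) (F' s x) (Icc a b) s)
    {s : ℝ} (hs : s ∈ Icc a b) :
    (∫ x in c..d, F s x) - ∫ x in c..d, F a x = ∫ τ in a..s, ∫ x in c..d, F' τ x := by
  have hsub : Icc a s ⊆ Icc a b := Icc_subset_Icc_right hs.2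
  have hFTC : ∀ x, ∫ τ in a..s, F' τ x = F s x - F a x := fun x => by
    refine integral_eq_sub_of_hasDerivAt_of_le hs.1
      (fun τ hτ => (hderiv x τ (hsub hτ)).continuousWithinAt.mono hsub)
      (fun τ hτ => (hderiv x τ (hsub (Ioo_subset_Icc_self hτ))).hasDerivAt
        (Icc_mem_nhds hτ.1 (hτ.2.trans_le hs.2))) ?_
    refine ContinuousOn.intervalIntegrable_of_Icc hs.1 ?_
    exact (hF'.comp (continuous_id.prodMk continuous_const).continuousOn
      fun τ hτ => ⟨hsub hτ, trivial⟩)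
  have hint : IntegrableOn (uncurry F') (uIoc a s ×ˢ uIoc c d) := by
    refine ((hF'.mono (prod_mono ?_ (subset_univ _))).integrableOn_compact
      (isCompact_uIcc.prod isCompact_uIcc)).mono_set (prod_mono uIoc_subset_uIcc uIoc_subset_uIcc)
    rw [uIcc_of_le hs.1]
    exact hsub
  rw [← integral_sub (hF s hs) (hF a (left_mem_Icc.2 (hs.1.trans hs.2))),
    intervalIntegral_intervalIntegral_swap hint]
  simp_rw [hFTC]

theorem hasDerivWithinAt_intervalIntegral_Icc
    (hF : ∀ s ∈ Icc a b, IntervalIntegrable (F s) volume c d)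
    (hF' : ContinuousOn (uncurry F') (Icc a b ×ˢ univ))
    (hderiv : ∀ x, ∀ s ∈ Icc a b, HasDerivWithinAt (F · x) (F' s x) (Icc a b) s)
    {t : ℝ} (ht : t ∈ Icc a b) :
    HasDerivWithinAt (fun s => ∫ x in c..d, F s x) (∫ x in c..d, F' t x) (Icc a b) t := by
  have hg : ContinuousOn (fun s => ∫ x in c..d, F' s x) (Icc a b) :=
    hF'.intervalIntegral_of_prod_univ c d
  have : Fact (t ∈ Icc a b) := ⟨ht⟩ -- provides the `FTCFilter` instance for `Icc a b`
  have hprimitive := integral_hasDerivWithinAt_right (s := Icc a b)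
    ((hg.mono (uIcc_subset_Icc (left_mem_Icc.2 (ht.1.trans ht.2)) ht)).intervalIntegrable)
    (hg.stronglyMeasurableAtFilter_nhdsWithin measurableSet_Icc t) (hg t ht)
  refine (hprimitive.const_add (∫ x in c..d, F a x)).congr (fun s hs => ?_) ?_ <;>
  · rw [← intervalIntegral_sub_eq_intervalIntegral_intervalIntegral hF hF' hderiv ‹_›]
    ring

theorem hasDerivWithinAt_intervalIntegral_Ico
    (hF : ∀ s ∈ Ico a b, IntervalIntegrable (F s) volume c d)
    (hF' : ContinuousOn (uncurry F') (Ico a b ×ˢ univ))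
    (hderiv : ∀ x, ∀ s ∈ Ico a b, HasDerivWithinAt (F · x) (F' s x) (Ico a b) s)
    {t : ℝ} (ht : t ∈ Ico a b) :
    HasDerivWithinAt (fun s => ∫ x in c..d, F s x) (∫ x in c..d, F' t x) (Ico a b) t := by
  obtain ⟨b', htb', hb'b⟩ := exists_between ht.2
  have hsub : Icc a b' ⊆ Ico a b := Icc_subset_Ico_right hb'b
  refine (hasDerivWithinAt_intervalIntegral_Icc (fun s hs => hF s (hsub hs))
    (hF'.mono (prod_mono hsub subset_rfl)) (fun x s hs => (hderiv x s (hsub hs)).mono hsub)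
    ⟨ht.1, htb'.le⟩).mono_of_mem_nhdsWithin ?_
  exact mem_nhdsWithin.2 ⟨Iio b', isOpen_Iio, htb', fun y ⟨hy, hy'⟩ => ⟨hy'.1, hy.le⟩⟩

end ParametricIntegral

theorem le_mul_exp_of_hasDerivWithinAt_Ico {f f' : ℝ → ℝ} {a b K : ℝ}
    (hf : ∀ t ∈ Ico a b, HasDerivWithinAt f (f' t) (Ico a b) t)
    (bound : ∀ t ∈ Ico a b, f' t ≤ K * f t) {t : ℝ} (ht : t ∈ Ico a b) :
    f t ≤ f a * exp (K * (t - a)) := by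
  have hsub : Icc a t ⊆ Ico a b := Icc_subset_Ico_right ht.2
  have hright : ∀ τ ∈ Ico a t, HasDerivWithinAt f (f' τ) (Ici τ) τ := fun τ hτ =>
    (hf τ (hsub (Ico_subset_Icc_self hτ))).mono_of_mem_nhdsWithin
      (Filter.mem_of_superset (Ico_mem_nhdsGE (hτ.2.trans ht.2)) (Ico_subset_Ico_left hτ.1))
  have gronwall := le_gronwallBound_of_liminf_deriv_right_le (ε := 0)
    (fun τ hτ => (hf τ (hsub hτ)).continuousWithinAt.mono hsub)
    (fun τ hτ r hr => (hright τ hτ).liminf_right_slope_le hr)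
    le_rfl (fun τ hτ => by simpa using bound τ (hsub (Ico_subset_Icc_self hτ)))
    t (right_mem_Icc.2 ht.1)
  rwa [gronwallBound_ε0] at gronwall

theorem intervalIntegral_two_mul_momentum_mul_deriv_eq {v vx vxx V Vt Vx : ℝ → ℝ}
    {p b γ : ℝ}
    (hper : Periodic v p) (hvx : ∀ x, HasDerivAt v (vx x) x)
    (hvxx : ∀ x, HasDerivAt vx (vxx x) x) (hVdef : ∀ x, V x = v x - vxx x)
    (hVx : ∀ x, HasDerivAt V (Vx x) x) (hVxc : Continuous Vx)
    (hpde : ∀ x, Vt x + (b * v x - γ) * Vx x + 2 * b * V x * vx x = 0) :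
    ∫ x in (0 : ℝ)..p, 2 * V x * Vt x = -3 * b * ∫ x in (0 : ℝ)..p, V x ^ 2 * vx x := by
  have hvc : Continuous v := continuous_iff_continuousAt.2 fun x => (hvx x).continuousAt
  have hvxc : Continuous vx := continuous_iff_continuousAt.2 fun x => (hvxx x).continuousAt
  have hVc : Continuous V := continuous_iff_continuousAt.2 fun x => (hVx x).continuousAt
  have hVper : Periodic V p := fun x => by
    rw [hVdef, hVdef, hper x, (hper.periodic_of_hasDerivAt hvx).periodic_of_hasDerivAt hvxx x]
  have hflux : ∫ x in (0 : ℝ)..p,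
      (b * vx x * V x ^ 2 + (b * v x - γ) * (2 * V x * Vx x)) = 0 := by
    refine Periodic.intervalIntegral_deriv_eq_zero (f := fun x => (b * v x - γ) * V x ^ 2)
      (fun x => by simp only [hper x, hVper x]) (fun x => ?_)
      (Continuous.intervalIntegrable (by fun_prop) _ _)
    refine ((((hvx x).const_mul b).sub_const γ).fun_mul ((hVx x).fun_pow 2)).congr_deriv ?_
    push_cast
    ring
  have hpointwise : ∀ x, 2 * V x * Vt x = -3 * b * (V x ^ 2 * vx x) -
      (b * vx x * V x ^ 2 + (b * v x - γ) * (2 * V x * Vx x)) := fun x => by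
    linear_combination 2 * V x * hpde x
  simp_rw [hpointwise]
  rw [intervalIntegral.integral_sub (Continuous.intervalIntegrable (by fun_prop) _ _)
    (Continuous.intervalIntegrable (by fun_prop) _ _), hflux, intervalIntegral.integral_const_mul,
    sub_zero]

theorem momentum_L2_energy_identity_general
    (T : ℝ) (γ : ℝ) (β : ℝ → ℝ)
    (v vx vxx V Vt Vx : ℝ → ℝ → ℝ)
    (hper : ∀ t x, v t (x + 2 * π) = v t x)
    (hvx : ∀ t ∈ Set.Ico (0 : ℝ) T, ∀ x : ℝ, HasDerivAt (fun y => v t y) (vx t x) x)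
    (hvxx : ∀ t ∈ Set.Ico (0 : ℝ) T, ∀ x : ℝ, HasDerivAt (fun y => vx t y) (vxx t x) x)
    (hVdef : ∀ t x, V t x = v t x - vxx t x)
    (hVt : ∀ t ∈ Set.Ico (0 : ℝ) T, ∀ x : ℝ,
      HasDerivWithinAt (fun s => V s x) (Vt t x) (Set.Ico 0 T) t)
    (hVx : ∀ t ∈ Set.Ico (0 : ℝ) T, ∀ x : ℝ, HasDerivAt (fun y => V t y) (Vx t x) x)
    (hVc : ContinuousOn (fun p : ℝ × ℝ => V p.1 p.2) (Set.Ico 0 T ×ˢ Set.univ))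
    (hVtc : ContinuousOn (fun p : ℝ × ℝ => Vt p.1 p.2) (Set.Ico 0 T ×ˢ Set.univ))
    (hVxc : ContinuousOn (fun p : ℝ × ℝ => Vx p.1 p.2) (Set.Ico 0 T ×ˢ Set.univ))
    (hpde : ∀ t ∈ Set.Ico (0 : ℝ) T, ∀ x : ℝ,
      Vt t x + (β t * v t x - γ) * Vx t x + 2 * β t * V t x * vx t x = 0) :
    (∀ t ∈ Set.Ico (0 : ℝ) T,
      HasDerivWithinAt (fun s => ∫ x in (0 : ℝ)..(2 * π), (V s x) ^ 2)
        (-3 * β t * ∫ x in (0 : ℝ)..(2 * π), (V t x) ^ 2 * vx t x) (Set.Ico 0 T) t) ∧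
    (∀ K : ℝ, 0 ≤ K →
      (∀ t ∈ Set.Ico (0 : ℝ) T, ∀ x : ℝ, -K ≤ β t * vx t x) →
      ∀ t ∈ Set.Ico (0 : ℝ) T,
        (∫ x in (0 : ℝ)..(2 * π), (V t x) ^ 2)
          ≤ Real.exp (3 * K * t) * ∫ x in (0 : ℝ)..(2 * π), (V 0 x) ^ 2) := by
  have hVcont : ∀ t ∈ Ico (0 : ℝ) T, Continuous (V t) := fun t ht =>
    continuous_iff_continuousAt.2 fun x => (hVx t ht x).continuousAt
  have hvxcont : ∀ t ∈ Ico (0 : ℝ) T, Continuous (vx t) := fun t ht =>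
    continuous_iff_continuousAt.2 fun x => (hvxx t ht x).continuousAt
  have energy_deriv : ∀ t ∈ Ico (0 : ℝ) T,
      HasDerivWithinAt (fun s => ∫ x in (0 : ℝ)..(2 * π), V s x ^ 2)
        (∫ x in (0 : ℝ)..(2 * π), 2 * V t x * Vt t x) (Ico 0 T) t := fun t ht =>
    hasDerivWithinAt_intervalIntegral_Ico (F := fun s x => V s x ^ 2)
      (fun s hs => ((hVcont s hs).pow 2).intervalIntegrable _ _)
      ((continuousOn_const.fun_mul hVc).fun_mul hVtc)
      (fun x s hs => by simpa using (hVt s hs x).fun_pow 2) ht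
  have energy_flux : ∀ t ∈ Ico (0 : ℝ) T, ∫ x in (0 : ℝ)..(2 * π), 2 * V t x * Vt t x =
      -3 * β t * ∫ x in (0 : ℝ)..(2 * π), V t x ^ 2 * vx t x := fun t ht =>
    intervalIntegral_two_mul_momentum_mul_deriv_eq (hper t) (hvx t ht) (hvxx t ht) (hVdef t)
      (hVx t ht) (hVxc.comp_continuous (Continuous.prodMk_right t) fun _ => ⟨ht, trivial⟩)
      (hpde t ht)
  have energy_identity : ∀ t ∈ Ico (0 : ℝ) T,
      HasDerivWithinAt (fun s => ∫ x in (0 : ℝ)..(2 * π), V s x ^ 2)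
        (-3 * β t * ∫ x in (0 : ℝ)..(2 * π), V t x ^ 2 * vx t x) (Ico 0 T) t := fun t ht =>
    energy_flux t ht ▸ energy_deriv t ht
  refine ⟨energy_identity, fun K _ hbound t ht => ?_⟩
  have energy_growth : ∀ s ∈ Ico (0 : ℝ) T,
      -3 * β s * ∫ x in (0 : ℝ)..(2 * π), V s x ^ 2 * vx s x ≤
        3 * K * ∫ x in (0 : ℝ)..(2 * π), V s x ^ 2 := fun s hs => by
    have hVs := hVcont s hs
    have hvxs := hvxcont s hs
    rw [← intervalIntegral.integral_const_mul, ← intervalIntegral.integral_const_mul]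
    refine intervalIntegral.integral_mono_on (by positivity)
      (Continuous.intervalIntegrable (by fun_prop) _ _)
      (Continuous.intervalIntegrable (by fun_prop) _ _) fun x _ => ?_
    nlinarith [mul_nonneg (neg_le_iff_add_nonneg.1 (hbound s hs x)) (sq_nonneg (V s x))]
  simpa [mul_comm] using le_mul_exp_of_hasDerivWithinAt_Ico energy_identity energy_growth ht

/-- The L²-energy identity for the momentum (proof of Theorem 2.6):
d/dt ∫₀^{2π} V² dx = −3β(t) ∫₀^{2π} V² v_x dx, and the resulting Grönwall bound
∫₀^{2π} V(t)² dx ≤ e^{3Kt} ∫₀^{2π} V(0)² dx whenever β v_x ≥ −K. -/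
theorem momentum_L2_energy_identity
    (T : ℝ) (hT : 0 < T) (γ : ℝ) (β : ℝ → ℝ) (hβ : ContinuousOn β (Set.Ico 0 T))
    (v vx vxx V Vt Vx : ℝ → ℝ → ℝ)
    (hper : ∀ t x, v t (x + 2 * π) = v t x)
    (hvx : ∀ t ∈ Set.Ico (0 : ℝ) T, ∀ x : ℝ, HasDerivAt (fun y => v t y) (vx t x) x)
    (hvxx : ∀ t ∈ Set.Ico (0 : ℝ) T, ∀ x : ℝ, HasDerivAt (fun y => vx t y) (vxx t x) x)
    (hVdef : ∀ t x, V t x = v t x - vxx t x)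
    (hVt : ∀ t ∈ Set.Ico (0 : ℝ) T, ∀ x : ℝ,
      HasDerivWithinAt (fun s => V s x) (Vt t x) (Set.Ico 0 T) t)
    (hVx : ∀ t ∈ Set.Ico (0 : ℝ) T, ∀ x : ℝ, HasDerivAt (fun y => V t y) (Vx t x) x)
    (hvc : ContinuousOn (fun p : ℝ × ℝ => v p.1 p.2) (Set.Ico 0 T ×ˢ Set.univ))
    (hvxc : ContinuousOn (fun p : ℝ × ℝ => vx p.1 p.2) (Set.Ico 0 T ×ˢ Set.univ))
    (hVc : ContinuousOn (fun p : ℝ × ℝ => V p.1 p.2) (Set.Ico 0 T ×ˢ Set.univ))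
    (hVtc : ContinuousOn (fun p : ℝ × ℝ => Vt p.1 p.2) (Set.Ico 0 T ×ˢ Set.univ))
    (hVxc : ContinuousOn (fun p : ℝ × ℝ => Vx p.1 p.2) (Set.Ico 0 T ×ˢ Set.univ))
    (hpde : ∀ t ∈ Set.Ico (0 : ℝ) T, ∀ x : ℝ,
      Vt t x + (β t * v t x - γ) * Vx t x + 2 * β t * V t x * vx t x = 0) :
    (∀ t ∈ Set.Ico (0 : ℝ) T,
      HasDerivWithinAt (fun s => ∫ x in (0 : ℝ)..(2 * π), (V s x) ^ 2)
        (-3 * β t * ∫ x in (0 : ℝ)..(2 * π), (V t x) ^ 2 * vx t x) (Set.Ico 0 T) t) ∧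
    (∀ K : ℝ, 0 ≤ K →
      (∀ t ∈ Set.Ico (0 : ℝ) T, ∀ x : ℝ, -K ≤ β t * vx t x) →
      ∀ t ∈ Set.Ico (0 : ℝ) T,
        (∫ x in (0 : ℝ)..(2 * π), (V t x) ^ 2)
          ≤ Real.exp (3 * K * t) * ∫ x in (0 : ℝ)..(2 * π), (V 0 x) ^ 2) :=
  momentum_L2_energy_identity_general T γ β v vx vxx V Vt Vx hper hvx hvxx hVdef hVt hVx hVc hVtc
    hVxc hpde
end

section
/- Let T ∈ (0,∞], N ≥ 0, let β : [0,T) → (0,∞) be continuous, and let M : [0,T) → ℝ be locally Lipschitz with M'(t) ≤ β(t) N − β(t) M(t)²/2 for almost every t ∈ (0,T). If M(0) < −√(2N), then M(t) ≤ −√(2N) for all t ∈ [0,T) and M is nonincreasing on [0,T). -/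
/-!
Below the equilibrium `-√(2N)` the Riccati right-hand side `β (N - M² / 2)` is nonpositive, so by
the fundamental theorem of calculus for Lipschitz functions `M` cannot increase on an interval on
which it stays below `-√(2N)`. Were `M` to reach `-√(2N)`, then at the first such time it would be
at most `M 0 < -√(2N)`, which is absurd; so `M` stays below, and is therefore nonincreasing.
-/

open Real MeasureTheory Set

theorem LipschitzOnWith.le_of_ae_hasDerivAt_nonpos {f : ℝ → ℝ} {K : NNReal} {a b : ℝ}
    (hf : LipschitzOnWith K f (Icc a b)) (hab : a ≤ b)
    (hderiv : ∀ᵐ t, t ∈ Ioo a b → ∀ f' : ℝ, HasDerivAt f f' t → f' ≤ 0) :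
    f b ≤ f a := by
  have hAC : AbsolutelyContinuousOnInterval f a b :=
    (uIcc_of_le hab ▸ hf).absolutelyContinuousOnInterval
  -- Where `f` is not differentiable, `deriv f t` is the junk value `0`.
  have hderiv_nonpos : ∀ᵐ t ∂volume.restrict (Ioo a b), deriv f t ≤ 0 := by
    refine (ae_restrict_iff' measurableSet_Ioo).2 ?_
    filter_upwards [hderiv] with t ht htab
    by_cases hdiff : DifferentiableAt ℝ f t
    · exact ht htab _ hdiff.hasDerivAt
    · rw [deriv_zero_of_not_differentiableAt hdiff]
  have hint : ∫ t in a..b, deriv f t ≤ 0 := by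
    rw [intervalIntegral.integral_of_le hab, ← Measure.restrict_congr_set Ioo_ae_eq_Ioc]
    exact setIntegral_nonpos_of_ae_restrict hderiv_nonpos
  linarith [hAC.integral_deriv_eq_sub]

theorem mul_sub_mul_sq_div_two_nonpos {β N x : ℝ} (hβ : 0 ≤ β) (hx : x ≤ -√(2 * N)) :
    β * N - β * x ^ 2 / 2 ≤ 0 := by
  have h2N : 2 * N ≤ (-x) ^ 2 := (Real.sqrt_le_iff.1 (by linarith)).2
  nlinarith

theorem ContinuousOn.forall_lt_of_le_left_while_le {f : ℝ → ℝ} {a b c : ℝ}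
    (hf : ContinuousOn f (Icc a b)) (ha : f a < c)
    (hstep : ∀ x ∈ Ioc a b, (∀ u ∈ Ioo a x, f u ≤ c) → f x ≤ f a) :
    ∀ x ∈ Icc a b, f x < c := by
  intro x hx
  by_contra! hcx
  set A := Icc a x ∩ f ⁻¹' Ici c
  have hA_closed : IsClosed A :=
    (hf.mono (Icc_subset_Icc_right hx.2)).preimage_isClosed_of_isClosed isClosed_Icc isClosed_Ici
  have hA_bdd : BddBelow A := ⟨a, fun u hu => hu.1.1⟩
  have hmem : sInf A ∈ A := hA_closed.csInf_mem ⟨x, ⟨hx.1, le_rfl⟩, hcx⟩ hA_bdd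
  have hfirst : ∀ u ∈ Ioo a (sInf A), f u ≤ c := fun u hu => by
    by_contra! hcu
    exact hu.2.not_ge (csInf_le hA_bdd ⟨⟨hu.1.le, hu.2.le.trans hmem.1.2⟩, hcu.le⟩)
  have hleft : a < sInf A := hmem.1.1.lt_of_ne fun h => (h ▸ ha).not_ge hmem.2
  have hcross : c ≤ f (sInf A) := hmem.2
  linarith [hstep (sInf A) ⟨hleft, hmem.1.2.trans hx.2⟩ hfirst]

theorem riccati_persistence_general (T : EReal) (N : ℝ)
    (β : ℝ → ℝ)
    (hβpos : ∀ t : ℝ, 0 ≤ t → (t : EReal) < T → 0 < β t)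
    (M : ℝ → ℝ)
    (hMlip : ∀ a b : ℝ, 0 ≤ a → (b : EReal) < T →
      ∃ K : NNReal, LipschitzOnWith K M (Set.Icc a b))
    (hRic : ∀ᵐ (t : ℝ) ∂(volume : Measure ℝ), 0 < t → (t : EReal) < T →
      ∀ m' : ℝ, HasDerivAt M m' t → m' ≤ β t * N - β t * (M t) ^ 2 / 2)
    (hM0 : M 0 < -Real.sqrt (2 * N)) :
    (∀ t : ℝ, 0 ≤ t → (t : EReal) < T → M t ≤ -Real.sqrt (2 * N)) ∧
    AntitoneOn M {t : ℝ | 0 ≤ t ∧ (t : EReal) < T} := by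
  have hlt_T {u b : ℝ} (hub : u ≤ b) (hb : (b : EReal) < T) : (u : EReal) < T :=
    (EReal.coe_le_coe_iff.2 hub).trans_lt hb
  have hdecr : ∀ a b : ℝ, 0 ≤ a → a ≤ b → (b : EReal) < T →
      (∀ t ∈ Ioo a b, M t ≤ -√(2 * N)) → M b ≤ M a := by
    intro a b ha hab hb hbelow
    obtain ⟨K, hK⟩ := hMlip a b ha hb
    refine hK.le_of_ae_hasDerivAt_nonpos hab ?_
    filter_upwards [hRic] with t hRic_t ht m' hm'
    have htT := hlt_T ht.2.le hb
    exact (hRic_t (ha.trans_lt ht.1) htT m' hm').trans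
      (mul_sub_mul_sq_div_two_nonpos (hβpos t (ha.trans ht.1.le) htT).le (hbelow t ht))
  have hlt : ∀ t : ℝ, 0 ≤ t → (t : EReal) < T → M t < -√(2 * N) := fun t ht htT =>
    (hMlip 0 t le_rfl htT).choose_spec.continuousOn.forall_lt_of_le_left_while_le hM0
      (fun x hx => hdecr 0 x le_rfl hx.1.le (hlt_T hx.2 htT)) t ⟨ht, le_rfl⟩
  refine ⟨fun t ht htT => (hlt t ht htT).le, ?_⟩
  rintro a ⟨ha, -⟩ b ⟨-, hb⟩ hab
  exact hdecr a b ha hab hb fun u hu => (hlt u (ha.trans hu.1.le) (hlt_T hu.2.le hb)).le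

/-- The persistence statement (6.4'') of Proposition 6.2, as a deterministic
Riccati comparison result: if M is locally Lipschitz on [0,T) with
M' ≤ βN − βM²/2 a.e. and M(0) < −√(2N), then M(t) ≤ −√(2N) on [0,T) and M is
nonincreasing there. Here T ∈ (0,∞] is encoded as an extended real number. -/
theorem riccati_persistence (T : EReal) (hT : 0 < T) (N : ℝ) (hN : 0 ≤ N)
    (β : ℝ → ℝ) (hβc : ContinuousOn β {t : ℝ | 0 ≤ t ∧ (t : EReal) < T})
    (hβpos : ∀ t : ℝ, 0 ≤ t → (t : EReal) < T → 0 < β t)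
    (M : ℝ → ℝ)
    (hMlip : ∀ a b : ℝ, 0 ≤ a → (b : EReal) < T →
      ∃ K : NNReal, LipschitzOnWith K M (Set.Icc a b))
    (hRic : ∀ᵐ (t : ℝ) ∂(volume : Measure ℝ), 0 < t → (t : EReal) < T →
      ∀ m' : ℝ, HasDerivAt M m' t → m' ≤ β t * N - β t * (M t) ^ 2 / 2)
    (hM0 : M 0 < -Real.sqrt (2 * N)) :
    (∀ t : ℝ, 0 ≤ t → (t : EReal) < T → M t ≤ -Real.sqrt (2 * N)) ∧
    AntitoneOn M {t : ℝ | 0 ≤ t ∧ (t : EReal) < T} :=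
  riccati_persistence_general T N β hβpos M hMlip hRic hM0
end

section
/- Let N ≥ 0, b* > 0, c ∈ (0,1), and let β : [0,∞) → (0,∞) be continuous with β(t) ≥ c·e^{−b* t / 2} for all t ≥ 0. Then there is no locally Lipschitz function M : [0,∞) → ℝ satisfying both M'(t) ≤ β(t) N − β(t) M(t)²/2 for almost every t > 0 and M(0) < −(1/2)√((b*)²/c² + 8N) − b*/(2c). Equivalently, any locally Lipschitz M : [0,T) → ℝ satisfying this differential inequality almost everywhere together with this initial bound, and defined on a maximal interval, must have T < ∞. -/
/-!
Where `M ≤ -√(2N)` the inequality forces `M' ≤ 0`, so `M` never rises above `M 0 = -A`.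
On that region `N - M²/2 ≤ -(1/2 - N/A²) M²`, hence `1/|M| = -1/M` decreases with rate at least
`(1/2 - N/A²) c e^{-b t/2}`. Integrating over `[0, ∞)`, `1/|M|` would drop by
`2c(1/2 - N/A²)/b`, which the initial bound makes larger than its initial value `1/A`;
but `1/|M|` stays positive.
-/

open Real MeasureTheory Set
open Filter Topology

namespace AbsolutelyContinuousOnInterval

variable {f g : ℝ → ℝ} {a b : ℝ}

theorem sub_le_integral_of_hasDerivAt_le (hab : a ≤ b) (hf : AbsolutelyContinuousOnInterval f a b)
    (hg : IntervalIntegrable g volume a b)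
    (h : ∀ᵐ x, x ∈ Ioo a b → ∀ f', HasDerivAt f f' x → f' ≤ g x) :
    f b - f a ≤ ∫ x in a..b, g x := by
  rw [← hf.integral_deriv_eq_sub]
  refine intervalIntegral.integral_mono_ae_restrict hab hf.intervalIntegrable_deriv hg ?_
  rw [Measure.restrict_congr_set Ioo_ae_eq_Icc.symm]
  filter_upwards [ae_restrict_mem measurableSet_Ioo, ae_restrict_of_ae h,
    ae_restrict_of_ae hf.ae_differentiableAt] with x hx hle hdiff
  exact hle hx _ (hdiff (Icc_subset_uIcc (Ioo_subset_Icc_self hx))).hasDerivAt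

/-- Continuous induction on `{x | f x ≤ f a}`: near a point of this set `f` stays below `U`,
so it cannot increase there. -/
theorem le_left_of_hasDerivAt_nonpos_of_lt {U : ℝ} (hf : AbsolutelyContinuousOnInterval f a b)
    (ha : f a < U) (h : ∀ᵐ x, x ∈ Ioo a b → f x < U → ∀ f', HasDerivAt f f' x → f' ≤ 0) :
    ∀ x ∈ Icc a b, f x ≤ f a := by
  have hcont : ContinuousOn f (Icc a b) := hf.continuousOn.mono Icc_subset_uIcc
  suffices Icc a b ⊆ {x | f x ≤ f a} from this
  refine IsClosed.Icc_subset_of_forall_mem_nhdsWithin ?_ (le_refl (f a)) ?_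
  · rw [inter_comm]
    exact hcont.preimage_isClosed_of_isClosed isClosed_Icc isClosed_Iic
  rintro x ⟨hxa, hx⟩
  have hbelow : ∀ᶠ y in 𝓝[>] x, f y < U :=
    ((hcont x (Ico_subset_Icc_self hx)).mono_of_mem_nhdsWithin
      (Icc_mem_nhdsGT_of_mem hx)).eventually (gt_mem_nhds (hxa.trans_lt ha))
  obtain ⟨u, hxu, hu⟩ := mem_nhdsGT_iff_exists_Ioo_subset.1 (hbelow.and (Ico_mem_nhdsGT hx.2))
  filter_upwards [Ioo_mem_nhdsGT hxu] with y hy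
  have hyb : y ≤ b := (hu ⟨hy.1, hy.2⟩).2.2.le
  have hxy : uIcc x y ⊆ uIcc a b := by
    rw [uIcc_of_le hy.1.le, uIcc_of_le (hx.1.trans (hy.1.le.trans hyb))]
    exact Icc_subset_Icc hx.1 hyb
  have hmono := (hf.mono hxy).sub_le_integral_of_hasDerivAt_le hy.1.le intervalIntegrable_const
    (by
      filter_upwards [h] with z hz hzxy
      exact hz ⟨hx.1.trans_lt hzxy.1, hzxy.2.trans_le hyb⟩ (hu ⟨hzxy.1, hzxy.2.trans hy.2⟩).1)
  rw [intervalIntegral.integral_zero] at hmono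
  exact (sub_nonpos.1 hmono).trans hxa

end AbsolutelyContinuousOnInterval

theorem lipschitzOnWith_inv_of_le_norm {𝕜 : Type*} [NormedDivisionRing 𝕜] {r : NNReal}
    (hr : 0 < r) : LipschitzOnWith (r ^ 2)⁻¹ (fun x : 𝕜 => x⁻¹) {x | (r : ℝ) ≤ ‖x‖} := by
  rw [lipschitzOnWith_iff_dist_le_mul]
  intro x (hx : (r : ℝ) ≤ ‖x‖) y (hy : (r : ℝ) ≤ ‖y‖)
  have hr' : (0 : ℝ) < r := hr
  have hx0 : x ≠ 0 := norm_pos_iff.1 (hr'.trans_le hx)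
  have hy0 : y ≠ 0 := norm_pos_iff.1 (hr'.trans_le hy)
  rw [dist_inv_inv₀ hx0 hy0, NNReal.coe_inv, NNReal.coe_pow, div_eq_inv_mul, sq]
  gcongr

theorem div_sq_le_of_riccati {N A m m' β γ : ℝ} (hN : 0 ≤ N) (hNA : 2 * N ≤ A ^ 2) (hA : 0 < A)
    (hm : m ≤ -A) (hγ : 0 ≤ γ) (hγβ : γ ≤ β) (hm' : m' ≤ β * N - β * m ^ 2 / 2) :
    m' / m ^ 2 ≤ -(γ * (1 / 2 - N / A ^ 2)) := by
  have hAm : A ^ 2 ≤ m ^ 2 := by nlinarith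
  have hm0 : m ≠ 0 := by linarith
  have hβ : 0 ≤ β := hγ.trans hγβ
  calc m' / m ^ 2 ≤ (β * N - β * m ^ 2 / 2) / m ^ 2 := by gcongr
    _ = β * (N / m ^ 2 - 1 / 2) := by field_simp
    _ ≤ β * (N / A ^ 2 - 1 / 2) := by gcongr
    _ ≤ γ * (N / A ^ 2 - 1 / 2) := by
        refine mul_le_mul_of_nonpos_right hγβ ?_
        rw [sub_nonpos, div_le_iff₀ (by positivity)]
        linarith
    _ = -(γ * (1 / 2 - N / A ^ 2)) := by ring

/-- The threshold on `M 0` says that it lies below the smaller root of `c m² + b m - 2cN`. -/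
theorem neg_mul_lt_of_lt_smaller_root {N b c m : ℝ} (hN : 0 ≤ N) (hc : 0 < c)
    (hm : m < -(1 / 2) * √(b ^ 2 / c ^ 2 + 8 * N) - b / (2 * c)) :
    -b * m < c * (m ^ 2 - 2 * N) := by
  set s := √(b ^ 2 / c ^ 2 + 8 * N)
  have hs : 0 ≤ s := Real.sqrt_nonneg _
  have hs2 : (c * s) ^ 2 = b ^ 2 + 8 * c ^ 2 * N := by
    rw [mul_pow, Real.sq_sqrt (by positivity)]
    field_simp
  have hcs : c * s < -2 * c * m - b := by
    have := mul_lt_mul_of_pos_left hm (by positivity : 0 < 2 * c)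
    field_simp at this
    linarith
  nlinarith [mul_nonneg hc.le hs]

theorem tendsto_mul_one_sub_exp {a b : ℝ} (hb : 0 < b) :
    Tendsto (fun T => a * (1 - exp (-b * T / 2))) atTop (𝓝 a) := by
  have : Tendsto (fun T => -b * T / 2) atTop atBot := by
    refine (tendsto_id.const_mul_atTop_of_neg (by linarith : -b / 2 < 0)).congr fun T => ?_
    simp only [id]
    ring
  simpa using ((Real.tendsto_exp_atBot.comp this).const_sub 1).const_mul a

section Riccati

variable {N b c A T : ℝ} {β M : ℝ → ℝ}

theorem le_initial_of_riccati (hβ : ∀ t, 0 < t → 0 ≤ β t)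
    (hM : AbsolutelyContinuousOnInterval M 0 T) (hM0 : M 0 < -√(2 * N))
    (hM' : ∀ᵐ t, 0 < t → ∀ m', HasDerivAt M m' t → m' ≤ β t * N - β t * M t ^ 2 / 2) :
    ∀ t ∈ Icc 0 T, M t ≤ M 0 := by
  refine hM.le_left_of_hasDerivAt_nonpos_of_lt hM0 ?_
  filter_upwards [hM'] with t ht htT hlt m' hm'
  have h2N : 2 * N < M t ^ 2 := by
    simpa using Real.lt_sq_of_sqrt_lt (lt_neg_of_lt_neg hlt)
  calc m' ≤ β t * (N - M t ^ 2 / 2) := by linarith [ht htT.1 m' hm']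
    _ ≤ 0 := mul_nonpos_of_nonneg_of_nonpos (hβ t htT.1) (by linarith)

theorem neg_inv_sub_le_of_riccati {K : NNReal} (hN : 0 ≤ N) (hb : 0 < b) (hc : 0 < c)
    (hA : 0 < A) (hNA : 2 * N ≤ A ^ 2) (hT : 0 ≤ T)
    (hβ : ∀ t, 0 ≤ t → c * exp (-b * t / 2) ≤ β t)
    (hM : LipschitzOnWith K M (Icc 0 T)) (hMA : ∀ t ∈ Icc 0 T, M t ≤ -A)
    (hM' : ∀ᵐ t, 0 < t → ∀ m', HasDerivAt M m' t → m' ≤ β t * N - β t * M t ^ 2 / 2) :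
    -(M T)⁻¹ + (M 0)⁻¹ ≤ 2 * c * (1 / 2 - N / A ^ 2) / b * (exp (-b * T / 2) - 1) := by
  set k := 1 / 2 - N / A ^ 2
  have hMnorm : MapsTo M (Icc 0 T) {x | (A.toNNReal : ℝ) ≤ ‖x‖} := fun t ht => by
    simp only [mem_ofPred_eq, Real.coe_toNNReal _ hA.le, Real.norm_eq_abs]
    exact le_abs.2 (Or.inr (le_neg.1 (hMA t ht)))
  have hφ : AbsolutelyContinuousOnInterval (fun t => -(M t)⁻¹) 0 T := by
    have := ((lipschitzOnWith_inv_of_le_norm (Real.toNNReal_pos.2 hA)).comp hM hMnorm).neg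
    rw [← uIcc_of_le hT] at this
    exact this.absolutelyContinuousOnInterval
  have hMac : AbsolutelyContinuousOnInterval M 0 T :=
    (uIcc_of_le hT ▸ hM).absolutelyContinuousOnInterval
  have hF (t : ℝ) : HasDerivAt (fun t => 2 * c * k / b * exp (-b * t / 2))
      (-(c * exp (-b * t / 2) * k)) t :=
    ((((hasDerivAt_id' t).const_mul (-b)).div_const 2).exp.const_mul _).congr_deriv
      (by field_simp)
  have hint : IntervalIntegrable (fun t => -(c * exp (-b * t / 2) * k)) volume 0 T := by
    apply Continuous.intervalIntegrable
    fun_prop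
  have key := hφ.sub_le_integral_of_hasDerivAt_le hT hint (by
    filter_upwards [hM', hMac.ae_differentiableAt] with t htM htd ht φ' hφ'
    have hMt := (htd (Icc_subset_uIcc (Ioo_subset_Icc_self ht))).hasDerivAt
    have hMtA := hMA t (Ioo_subset_Icc_self ht)
    rw [hφ'.unique (hMt.inv (by linarith)).neg, neg_div, neg_neg]
    exact div_sq_le_of_riccati hN hNA hA hMtA (by positivity) (hβ t ht.1.le) (htM ht.1 _ hMt))
  rw [intervalIntegral.integral_eq_sub_of_hasDerivAt (fun t _ => hF t) hint, mul_zero, zero_div,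
    exp_zero] at key
  linarith

theorem mul_one_sub_exp_lt_of_riccati {K : NNReal} (hN : 0 ≤ N) (hb : 0 < b) (hc : 0 < c)
    (hA : 0 < A) (hNA : 2 * N < A ^ 2) (hT : 0 ≤ T)
    (hβ : ∀ t, 0 ≤ t → c * exp (-b * t / 2) ≤ β t)
    (hM : LipschitzOnWith K M (Icc 0 T)) (hM0 : M 0 = -A)
    (hM' : ∀ᵐ t, 0 < t → ∀ m', HasDerivAt M m' t → m' ≤ β t * N - β t * M t ^ 2 / 2) :
    c * (A ^ 2 - 2 * N) * (1 - exp (-b * T / 2)) < b * A := by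
  have hβ0 (t : ℝ) (ht : 0 < t) : 0 ≤ β t :=
    (by positivity : 0 ≤ c * exp (-b * t / 2)).trans (hβ t ht.le)
  have hM0N : M 0 < -√(2 * N) := by
    rwa [hM0, neg_lt_neg_iff, Real.sqrt_lt' hA]
  have hMA : ∀ t ∈ Icc 0 T, M t ≤ -A :=
    hM0 ▸ le_initial_of_riccati hβ0 (uIcc_of_le hT ▸ hM).absolutelyContinuousOnInterval hM0N hM'
  have hdecay := neg_inv_sub_le_of_riccati hN hb hc hA hNA.le hT hβ hM hMA hM'
  have hMT : 0 < -(M T)⁻¹ := by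
    rw [neg_pos, inv_lt_zero]
    linarith [hMA T ⟨hT, le_rfl⟩]
  rw [hM0, inv_neg] at hdecay
  have hrate : 2 * c * (1 / 2 - N / A ^ 2) / b * (1 - exp (-b * T / 2)) < A⁻¹ := by linarith
  calc c * (A ^ 2 - 2 * N) * (1 - exp (-b * T / 2))
      = 2 * c * (1 / 2 - N / A ^ 2) / b * (1 - exp (-b * T / 2)) * (b * A ^ 2) := by
        field_simp
    _ < A⁻¹ * (b * A ^ 2) := by gcongr
    _ = b * A := by field_simp

end Riccati

theorem wave_breaking_finite_time_general (N bstar c : ℝ) (hN : 0 ≤ N) (hb : 0 < bstar)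
    (hc0 : 0 < c) (β : ℝ → ℝ)
    (hβlb : ∀ t : ℝ, 0 ≤ t → c * Real.exp (-bstar * t / 2) ≤ β t) :
    ¬ ∃ M : ℝ → ℝ,
      (∀ a b : ℝ, 0 ≤ a → ∃ K : NNReal, LipschitzOnWith K M (Set.Icc a b)) ∧
      (∀ᵐ (t : ℝ) ∂(volume : Measure ℝ), 0 < t →
        ∀ m' : ℝ, HasDerivAt M m' t → m' ≤ β t * N - β t * (M t) ^ 2 / 2) ∧
      M 0 < -(1 / 2) * Real.sqrt (bstar ^ 2 / c ^ 2 + 8 * N) - bstar / (2 * c) := by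
  rintro ⟨M, hlip, hM', hM0⟩
  have hroot := neg_mul_lt_of_lt_smaller_root hN hc0 hM0
  obtain ⟨A, hA0⟩ : ∃ A, M 0 = -A := ⟨-M 0, (neg_neg _).symm⟩
  rw [hA0, neg_sq, neg_mul_neg] at hroot
  have hA : 0 < A := by
    have := Real.sqrt_nonneg (bstar ^ 2 / c ^ 2 + 8 * N)
    have : 0 < bstar / (2 * c) := by positivity
    linarith
  have hNA : 2 * N < A ^ 2 := by nlinarith
  have hlim : c * (A ^ 2 - 2 * N) ≤ bstar * A := by
    refine le_of_tendsto (tendsto_mul_one_sub_exp hb) ((eventually_ge_atTop 0).mono fun T hT => ?_)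
    obtain ⟨K, hK⟩ := hlip 0 T le_rfl
    exact (mul_one_sub_exp_lt_of_riccati hN hb hc0 hA hNA hT hβlb hK hA0 hM').le
  linarith

/-- The deterministic core of Proposition 6.3 (pathwise finite-time blow-up):
if β(t) ≥ c e^{−b*t/2} on [0,∞), there is no locally Lipschitz M : [0,∞) → ℝ
satisfying M' ≤ βN − βM²/2 a.e. together with the initial bound
M(0) < −(1/2)√((b*)²/c² + 8N) − b*/(2c). -/
theorem wave_breaking_finite_time (N bstar c : ℝ) (hN : 0 ≤ N) (hb : 0 < bstar)
    (hc0 : 0 < c) (hc1 : c < 1) (β : ℝ → ℝ)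
    (hβc : ContinuousOn β (Set.Ici 0)) (hβpos : ∀ t : ℝ, 0 ≤ t → 0 < β t)
    (hβlb : ∀ t : ℝ, 0 ≤ t → c * Real.exp (-bstar * t / 2) ≤ β t) :
    ¬ ∃ M : ℝ → ℝ,
      (∀ a b : ℝ, 0 ≤ a → ∃ K : NNReal, LipschitzOnWith K M (Set.Icc a b)) ∧
      (∀ᵐ (t : ℝ) ∂(volume : Measure ℝ), 0 < t →
        ∀ m' : ℝ, HasDerivAt M m' t → m' ≤ β t * N - β t * (M t) ^ 2 / 2) ∧
      M 0 < -(1 / 2) * Real.sqrt (bstar ^ 2 / c ^ 2 + 8 * N) - bstar / (2 * c) :=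
  wave_breaking_finite_time_general N bstar c hN hb hc0 β hβlb
end

section
/- Let 0 < τ* < ∞, K > 0, let β : [0,τ*] → (0,∞) be continuous, and let M : [0,τ*) → ℝ be locally Lipschitz such that liminf_{t→τ*} M(t) = −∞ and |M'(t) + β(t) M(t)²/2| ≤ K β(t) for almost every t ∈ (0,τ*). Then lim_{t→τ*} M(t) · ∫_t^{τ*} β(s) ds = −2. -/
open Real MeasureTheory Set Filter
open scoped NNReal Topology

/-!
The Riccati inequality forces `M' ≤ β (K - M² / 2) ≤ 0` wherever `M² ≥ 2K`, so once `M` drops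
below `-√(2K)`, which the liminf hypothesis guarantees arbitrarily close to `τ`, it can never come
back up; hence `M → -∞`. Then `1/M` is Lipschitz near `τ` with `(1/M)' = β/2 + O(Kβ/M²)`, and
integrating from `t` to `τ` gives `-1/M(t) = (1/2 + o(1)) ∫ₜ^τ β`, i.e. `M(t) ∫ₜ^τ β → -2`.
-/

namespace AbsolutelyContinuousOnInterval

variable {f g h : ℝ → ℝ} {a b : ℝ}

theorem sub_le_integral_of_ae_hasDerivAt_le (hf : AbsolutelyContinuousOnInterval f a b)
    (hab : a ≤ b) (hg : IntervalIntegrable g volume a b)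
    (hfg : ∀ᵐ x, x ∈ Ioo a b → ∀ f', HasDerivAt f f' x → f' ≤ g x) :
    f b - f a ≤ ∫ x in a..b, g x := by
  rw [← hf.integral_deriv_eq_sub]
  refine intervalIntegral.integral_mono_ae_restrict hab hf.intervalIntegrable_deriv hg ?_
  rw [Measure.restrict_congr_set Ioo_ae_eq_Icc.symm, EventuallyLE,
    ae_restrict_iff' measurableSet_Ioo]
  filter_upwards [hf.ae_differentiableAt, hfg] with x hdiff hle hx
  exact hle hx _ (hdiff (Ioo_subset_Icc_self.trans Icc_subset_uIcc hx)).hasDerivAt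

theorem abs_sub_sub_integral_le_of_ae_hasDerivAt (hf : AbsolutelyContinuousOnInterval f a b)
    (hab : a ≤ b) (hg : IntervalIntegrable g volume a b) (hh : IntervalIntegrable h volume a b)
    (hfgh : ∀ᵐ x, x ∈ Ioo a b → ∀ f', HasDerivAt f f' x → |f' - g x| ≤ h x) :
    |f b - f a - ∫ x in a..b, g x| ≤ ∫ x in a..b, h x := by
  have upper := hf.sub_le_integral_of_ae_hasDerivAt_le hab (hg.add hh) <| by
    filter_upwards [hfgh] with x hx hmem f' hf'
    linarith [(abs_le.1 (hx hmem f' hf')).2]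
  have lower := hf.neg.sub_le_integral_of_ae_hasDerivAt_le hab (hh.sub hg) <| by
    filter_upwards [hfgh] with x hx hmem f' hf'
    have := (abs_le.1 (hx hmem (-f') (by simpa using hf'.neg))).1
    linarith
  rw [intervalIntegral.integral_add hg hh] at upper
  rw [intervalIntegral.integral_sub hh hg] at lower
  simp only [Pi.neg_apply] at lower
  exact abs_le.2 ⟨by linarith, by linarith⟩

end AbsolutelyContinuousOnInterval

theorem LipschitzOnWith.le_left_of_ae_hasDerivAt_nonpos_below {f : ℝ → ℝ} {C : ℝ≥0} {a b L : ℝ}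
    (hf : LipschitzOnWith C f (Icc a b)) (hab : a ≤ b) (ha : f a < L)
    (hderiv : ∀ᵐ x, x ∈ Ioo a b → f x < L → ∀ f', HasDerivAt f f' x → f' ≤ 0) :
    f b ≤ f a := by
  -- Clamp `f` at a level `m ∈ (f a, L)`: the clamped function agrees with `f` near points
  -- where `f < m`, and elsewhere it sits at its maximum `m`, so its derivative is `≤ 0` a.e.
  obtain ⟨m, ham, hmL⟩ := exists_between ha
  set g := fun x => min (f x) m
  have hg : LipschitzOnWith C g (Icc a b) := by
    rw [← one_mul C]; exact (LipschitzWith.id.min_const m).comp_lipschitzOnWith hf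
  have hg_deriv : ∀ᵐ x, x ∈ Ioo a b → ∀ g', HasDerivAt g g' x → g' ≤ 0 := by
    filter_upwards [hderiv] with x hx hmem g' hg'
    rcases lt_or_ge (f x) m with hlt | hge
    · have hcont : ContinuousAt f x :=
        hf.continuousOn.continuousAt (Icc_mem_nhds hmem.1 hmem.2)
      have hgf : g =ᶠ[𝓝 x] f := by
        filter_upwards [hcont.eventually (gt_mem_nhds hlt)] with y hy
        exact min_eq_left hy.le
      exact hx hmem (hlt.trans hmL) g' (hg'.congr_of_eventuallyEq hgf.symm)
    · have hmax : IsLocalMax g x :=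
        Eventually.of_forall fun y => (min_le_right _ _).trans (min_eq_right hge).ge
      exact (hmax.hasDerivAt_eq_zero hg').le
  have key := (hg.mono (uIcc_of_le hab).subset).absolutelyContinuousOnInterval
    |>.sub_le_integral_of_ae_hasDerivAt_le hab intervalIntegrable_const hg_deriv
  simp only [intervalIntegral.integral_zero, g, min_eq_left ham.le] at key
  by_contra! hlt
  rcases min_choice (f b) m with h | h <;> rw [h] at key <;> linarith

theorem LipschitzOnWith.inv₀_of_le_norm {α 𝕜 : Type*} [PseudoMetricSpace α]
    [NormedDivisionRing 𝕜] {f : α → 𝕜} {C c : ℝ≥0} {s : Set α}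
    (hf : LipschitzOnWith C f s) (hc : 0 < c) (hfc : ∀ x ∈ s, (c : ℝ) ≤ ‖f x‖) :
    LipschitzOnWith (C / c ^ 2) (fun x => (f x)⁻¹) s := by
  refine LipschitzOnWith.of_dist_le_mul fun x hx y hy => ?_
  have hc' : (0 : ℝ) < c := hc
  have hne : ∀ z ∈ s, f z ≠ 0 := fun z hz => norm_pos_iff.1 (hc'.trans_le (hfc z hz))
  rw [dist_inv_inv₀ (hne x hx) (hne y hy)]
  calc dist (f x) (f y) / (‖f x‖ * ‖f y‖) ≤ C * dist x y / (c * c) :=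
        div_le_div₀ (by positivity) (hf.dist_le_mul x hx y hy) (by positivity)
          (mul_le_mul (hfc x hx) (hfc y hy) c.2 (norm_nonneg _))
    _ = ↑(C / c ^ 2) * dist x y := by push_cast; ring

theorem abs_inv_sub_inv_sub_integral_le_of_riccati {f β : ℝ → ℝ} {C : ℝ≥0} {K ε a b c : ℝ}
    (hf : LipschitzOnWith C f (Icc a b)) (hab : a ≤ b) (hc : 0 < c)
    (hfc : ∀ x ∈ Icc a b, c ≤ |f x|) (hε : 0 ≤ ε) (hKε : K ≤ ε * c ^ 2)
    (hβ : IntervalIntegrable β volume a b) (hβ_nonneg : ∀ x ∈ Ioo a b, 0 ≤ β x)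
    (hRic : ∀ᵐ x, x ∈ Ioo a b → ∀ f', HasDerivAt f f' x → |f' + β x * f x ^ 2 / 2| ≤ K * β x) :
    |(f b)⁻¹ - (f a)⁻¹ - (∫ x in a..b, β x) / 2| ≤ ε * ∫ x in a..b, β x := by
  lift c to ℝ≥0 using hc.le
  have hinv : AbsolutelyContinuousOnInterval (fun x => (f x)⁻¹) a b :=
    ((hf.inv₀_of_le_norm (NNReal.coe_pos.1 hc) hfc).mono
      (uIcc_of_le hab).subset).absolutelyContinuousOnInterval
  rw [← intervalIntegral.integral_div, ← intervalIntegral.integral_const_mul]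
  refine hinv.abs_sub_sub_integral_le_of_ae_hasDerivAt hab (hβ.div_const 2)
    (hβ.const_mul ε) ?_
  filter_upwards [hRic] with x hx hmem w hw
  have hfx : (c : ℝ) ^ 2 ≤ f x ^ 2 :=
    sq_le_sq.2 (by simpa using hfc x (Ioo_subset_Icc_self hmem))
  have hfx0 : 0 < f x ^ 2 := (pow_pos hc 2).trans_le hfx
  have hder : HasDerivAt f (-w * f x ^ 2) x := by
    have hfx_ne : f x ≠ 0 := by rintro h; simp [h] at hfx0
    have h := hw.inv (inv_ne_zero hfx_ne)
    rwa [show (fun y => (f y)⁻¹)⁻¹ = f from inv_inv f, inv_pow, div_inv_eq_mul] at h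
  have hβx := hβ_nonneg x hmem
  have key : f x ^ 2 * |w - β x / 2| ≤ f x ^ 2 * (ε * β x) := by
    calc f x ^ 2 * |w - β x / 2| = |-w * f x ^ 2 + β x * f x ^ 2 / 2| := by
          rw [← abs_of_pos hfx0, ← abs_mul, abs_of_pos hfx0, ← abs_neg]; ring_nf
      _ ≤ K * β x := hx hmem _ hder
      _ ≤ ε * c ^ 2 * β x := mul_le_mul_of_nonneg_right hKε hβx
      _ ≤ f x ^ 2 * (ε * β x) := by nlinarith [mul_nonneg hε hβx]
  exact le_of_mul_le_mul_left key hfx0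

theorem tendsto_intervalIntegral_nhdsLT_zero {f : ℝ → ℝ} {a b : ℝ} (hab : a < b)
    (hf : IntegrableOn f (Icc a b)) : Tendsto (fun t => ∫ s in t..b, f s) (𝓝[<] b) (𝓝 0) := by
  rw [← uIcc_of_le hab.le] at hf
  have := (intervalIntegral.continuousOn_primitive_interval_left hf b right_mem_uIcc).mono
    (Ioo_subset_Icc_self.trans (uIcc_of_le hab.le).symm.subset)
  rw [ContinuousWithinAt, nhdsWithin_Ioo_eq_nhdsLT hab, intervalIntegral.integral_same] at this
  exact this

theorem abs_add_half_le_of_tendsto {α : Type*} {l : Filter α} [l.NeBot] {F G : α → ℝ}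
    {u v ε : ℝ} (hF : Tendsto F l (𝓝 0)) (hG : Tendsto G l (𝓝 0))
    (h : ∀ᶠ b in l, |F b - u - (v - G b) / 2| ≤ ε * (v - G b)) :
    |u + v / 2| ≤ ε * v := by
  have hlhs := ((hF.sub_const u).sub ((hG.const_sub v).div_const 2)).abs
  have hrhs := (hG.const_sub v).const_mul ε
  rw [show (0 : ℝ) - u - (v - 0) / 2 = -(u + v / 2) by ring, abs_neg] at hlhs
  rw [sub_zero] at hrhs
  exact le_of_tendsto_of_tendsto hlhs hrhs h

section WaveBreaking

variable {τ K : ℝ} {β M : ℝ → ℝ}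

theorem tendsto_atBot_of_riccati (hτ : 0 < τ) (hβ : ∀ t ∈ Ioo 0 τ, 0 ≤ β t)
    (hMlip : ∀ a b : ℝ, 0 ≤ a → b < τ → ∃ K' : ℝ≥0, LipschitzOnWith K' M (Icc a b))
    (hblow : ∀ C : ℝ, ∃ᶠ t in 𝓝[<] τ, M t < C)
    (hRic : ∀ᵐ t, t ∈ Ioo 0 τ → ∀ m', HasDerivAt M m' t → |m' + β t * M t ^ 2 / 2| ≤ K * β t) :
    Tendsto M (𝓝[<] τ) atBot := by
  refine tendsto_atBot.2 fun C => ?_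
  obtain ⟨c, hcC, hc0, hcK⟩ : ∃ c : ℝ, -c ≤ C ∧ 0 ≤ c ∧ 2 * K ≤ c ^ 2 :=
    ⟨|C| + 2 * |K| + 1, by linarith [neg_abs_le C, abs_nonneg K], by positivity,
      by nlinarith [abs_nonneg C, abs_nonneg K, le_abs_self K]⟩
  have hpos : ∀ᶠ t in 𝓝[<] τ, 0 < t ∧ t < τ :=
    (eventually_nhdsWithin_of_eventually_nhds (lt_mem_nhds hτ)).and self_mem_nhdsWithin
  obtain ⟨t₀, hMt₀, ht₀, ht₀τ⟩ := ((hblow (-c)).and_eventually hpos).exists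
  have htrap : ∀ t ∈ Ico t₀ τ, M t < -c := by
    rintro t ⟨ht₀t, htτ⟩
    obtain ⟨L, hL⟩ := hMlip t₀ t ht₀.le htτ
    refine lt_of_le_of_lt (hL.le_left_of_ae_hasDerivAt_nonpos_below ht₀t hMt₀ ?_) hMt₀
    filter_upwards [hRic] with x hx hmem hMx m' hm'
    have hmem' : x ∈ Ioo 0 τ := ⟨ht₀.trans hmem.1, hmem.2.trans htτ⟩
    have hbound := (abs_le.1 (hx hmem' m' hm')).2
    have hβx := hβ x hmem'
    nlinarith [mul_le_mul_of_nonneg_left (show 2 * K ≤ M x ^ 2 by nlinarith) hβx]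
  filter_upwards [Ioo_mem_nhdsLT ht₀τ] with t ht
  exact ((htrap t ⟨ht.1.le, ht.2⟩).trans_le hcC).le

theorem eventually_abs_inv_add_half_integral_le (hτ : 0 < τ) (hβc : ContinuousOn β (Icc 0 τ))
    (hβ : ∀ t ∈ Ioo 0 τ, 0 ≤ β t)
    (hMlip : ∀ a b : ℝ, 0 ≤ a → b < τ → ∃ K' : ℝ≥0, LipschitzOnWith K' M (Icc a b))
    (hMbot : Tendsto M (𝓝[<] τ) atBot)
    (hRic : ∀ᵐ t, t ∈ Ioo 0 τ → ∀ m', HasDerivAt M m' t → |m' + β t * M t ^ 2 / 2| ≤ K * β t)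
    {ε : ℝ} (hε : 0 < ε) :
    ∀ᶠ t in 𝓝[<] τ, |(M t)⁻¹ + (∫ s in t..τ, β s) / 2| ≤ ε * ∫ s in t..τ, β s := by
  obtain ⟨c, hc, hcK⟩ : ∃ c : ℝ, 0 < c ∧ K ≤ ε * c ^ 2 := by
    refine ⟨|K| / ε + 1, by positivity, ?_⟩
    have : |K| ≤ ε * (|K| / ε + 1) := by rw [mul_add, mul_div_cancel₀ _ hε.ne']; linarith
    nlinarith [le_abs_self K, abs_nonneg K, div_nonneg (abs_nonneg K) hε.le]
  have hev : ∀ᶠ t in 𝓝[<] τ, M t < -c ∧ 0 < t :=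
    (hMbot.eventually (eventually_lt_atBot (-c))).and
      (eventually_nhdsWithin_of_eventually_nhds (lt_mem_nhds hτ))
  obtain ⟨t₀, ht₀τ, ht₀⟩ := mem_nhdsLT_iff_exists_Ioo_subset.1 hev
  have hβint : ∀ u v, u ∈ Icc 0 τ → v ∈ Icc 0 τ → IntervalIntegrable β volume u v :=
    fun u v hu hv => (hβc.mono (uIcc_subset_Icc hu hv)).intervalIntegrable
  have hB0 := tendsto_intervalIntegral_nhdsLT_zero hτ hβc.integrableOn_Icc
  filter_upwards [Ioo_mem_nhdsLT ht₀τ] with t ht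
  set B := fun u => ∫ s in u..τ, β s
  have hstep : ∀ᶠ b in 𝓝[<] τ,
      |(M b)⁻¹ - (M t)⁻¹ - (B t - B b) / 2| ≤ ε * (B t - B b) := by
    filter_upwards [Ioo_mem_nhdsLT ht.2] with b hb
    have ht0 : 0 < t := (ht₀ ht).2
    have hb0 : 0 < b := ht0.trans hb.1
    obtain ⟨L, hL⟩ := hMlip t b ht0.le hb.2
    have hsplit : ∫ s in t..b, β s = B t - B b := by
      have := intervalIntegral.integral_add_adjacent_intervals
        (hβint t b ⟨ht0.le, ht.2.le⟩ ⟨hb0.le, hb.2.le⟩)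
        (hβint b τ ⟨hb0.le, hb.2.le⟩ (right_mem_Icc.2 hτ.le))
      linarith
    rw [← hsplit]
    refine abs_inv_sub_inv_sub_integral_le_of_riccati hL hb.1.le hc ?_ hε.le hcK
      (hβint t b ⟨ht0.le, ht.2.le⟩ ⟨hb0.le, hb.2.le⟩) ?_ ?_
    · intro x hx
      have := (ht₀ ⟨ht.1.trans_le hx.1, hx.2.trans_lt hb.2⟩).1
      rw [abs_of_neg (by linarith)]
      linarith
    · exact fun x hx => hβ x ⟨ht0.trans hx.1, hx.2.trans hb.2⟩
    · filter_upwards [hRic] with x hx hmem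
      exact hx ⟨ht0.trans hmem.1, hmem.2.trans hb.2⟩
  exact abs_add_half_le_of_tendsto hMbot.inv_tendsto_atBot hB0 hstep

end WaveBreaking

theorem wave_breaking_rate_general (τ : ℝ) (hτ : 0 < τ) (K : ℝ)
    (β : ℝ → ℝ) (hβc : ContinuousOn β (Set.Icc 0 τ))
    (hβpos : ∀ t ∈ Set.Icc (0 : ℝ) τ, 0 < β t)
    (M : ℝ → ℝ)
    (hMlip : ∀ a b : ℝ, 0 ≤ a → b < τ →
      ∃ K' : NNReal, LipschitzOnWith K' M (Set.Icc a b))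
    (hblow : ∀ C : ℝ, ∃ᶠ t in nhdsWithin τ (Set.Iio τ), M t < C)
    (hRic : ∀ᵐ (t : ℝ) ∂(volume : Measure ℝ), t ∈ Set.Ioo 0 τ →
      ∀ m' : ℝ, HasDerivAt M m' t → |m' + β t * (M t) ^ 2 / 2| ≤ K * β t) :
    Filter.Tendsto (fun t => M t * ∫ s in t..τ, β s)
      (nhdsWithin τ (Set.Iio τ)) (nhds (-2)) := by
  have hβ : ∀ t ∈ Ioo 0 τ, 0 ≤ β t := fun t ht => (hβpos t (Ioo_subset_Icc_self ht)).le
  have hMbot := tendsto_atBot_of_riccati hτ hβ hMlip hblow hRic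
  have hBpos : ∀ᶠ t in 𝓝[<] τ, 0 < ∫ s in t..τ, β s := by
    filter_upwards [Ioo_mem_nhdsLT hτ] with t ht
    refine intervalIntegral.intervalIntegral_pos_of_pos_on ?_
      (fun x hx => hβpos x ⟨ht.1.le.trans hx.1.le, hx.2.le⟩) ht.2
    exact (hβc.mono (uIcc_subset_Icc ⟨ht.1.le, ht.2.le⟩ (right_mem_Icc.2 hτ.le))).intervalIntegrable
  have hinv : Tendsto (fun t => (M t * ∫ s in t..τ, β s)⁻¹) (𝓝[<] τ) (𝓝 (-2)⁻¹) := by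
    refine Metric.tendsto_nhds.2 fun ε hε => ?_
    filter_upwards [hBpos, eventually_abs_inv_add_half_integral_le hτ hβc hβ hMlip hMbot hRic
      (half_pos hε)] with t hBt hbound
    set B := ∫ s in t..τ, β s
    rw [Real.dist_eq, show (M t * B)⁻¹ - (-2)⁻¹ = ((M t)⁻¹ + B / 2) / B by
      field_simp; ring, abs_div, abs_of_pos hBt, div_lt_iff₀ hBt]
    linarith [mul_lt_mul_of_pos_right (half_lt_self hε) hBt]
  simpa using hinv.inv₀ (by norm_num)

/-- The deterministic core of the wave-breaking rate Theorem 2.9: if M is locally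
Lipschitz on [0,τ*), liminf_{t→τ*} M(t) = −∞, and |M' + βM²/2| ≤ Kβ a.e., then
M(t)·∫ₜ^{τ*} β(s) ds → −2 as t → τ*. -/
theorem wave_breaking_rate (τ : ℝ) (hτ : 0 < τ) (K : ℝ) (hK : 0 < K)
    (β : ℝ → ℝ) (hβc : ContinuousOn β (Set.Icc 0 τ))
    (hβpos : ∀ t ∈ Set.Icc (0 : ℝ) τ, 0 < β t)
    (M : ℝ → ℝ)
    (hMlip : ∀ a b : ℝ, 0 ≤ a → b < τ →
      ∃ K' : NNReal, LipschitzOnWith K' M (Set.Icc a b))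
    (hblow : ∀ C : ℝ, ∃ᶠ t in nhdsWithin τ (Set.Iio τ), M t < C)
    (hRic : ∀ᵐ (t : ℝ) ∂(volume : Measure ℝ), t ∈ Set.Ioo 0 τ →
      ∀ m' : ℝ, HasDerivAt M m' t → |m' + β t * (M t) ^ 2 / 2| ≤ K * β t) :
    Filter.Tendsto (fun t => M t * ∫ s in t..τ, β s)
      (nhdsWithin τ (Set.Iio τ)) (nhds (-2)) :=
  wave_breaking_rate_general τ hτ K β hβc hβpos M hMlip hblow hRic
end
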